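/- arXiv:0811.3450 — 9 statements merged into one kernel-verified Lean document; each statement's English description precedes it below -/
import Mathlib

section
/- Let Γ be a uniform ranked poset of rank d and fix an element x of rank d. Then for any two elements a, a′ of the interval Γ_x with rk(a) = rk(a′) = k, there exists a down-up sequence from a to a′ all of whose members (both the rank-k elements and the rank-(k−1) elements) lie in Γ_x. -/
set_option linter.unusedSectionVars false
set_option linter.unusedVariables false

open scoped Classical

variable {Γ : Type*} [PartialOrder Γ] [OrderBot Γ] [Fintype Γ]

/-- `rk` is a rank function for the finite poset `Γ` (with least element `⊥`):
the bottom has rank `0` and ranks increase by one along covering relations.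
Equivalently, all maximal chains in `[⊥, x]` have the same length `rk x`. -/
def IsRanked (rk : Γ → ℕ) : Prop :=
  rk ⊥ = 0 ∧ ∀ a b : Γ, a ⋖ b → rk b = rk a + 1

/-- `rankSet rk x n` is the set `S_x(n) = {y ≤ x : rk x - rk y = n}`. -/
def rankSet (rk : Γ → ℕ) (x : Γ) (n : ℕ) : Set Γ := {y | y ≤ x ∧ rk y + n = rk x}

/-- `Γ` is uniform: for each `a`, the equivalence relation on `S_a(1)` generated by
`b ∼ c` whenever `S_b(1) ∩ S_c(1) ≠ ∅` has at most one equivalence class. -/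
def Uniform (rk : Γ → ℕ) : Prop :=
  ∀ a b c : Γ, b ∈ rankSet rk a 1 → c ∈ rankSet rk a 1 →
    Relation.EqvGen
      (fun u v => u ∈ rankSet rk a 1 ∧ v ∈ rankSet rk a 1 ∧
        (rankSet rk u 1 ∩ rankSet rk v 1).Nonempty)
      b c

/-- One down-up step inside the interval `[⊥, x]`. -/
def DUrel (rk : Γ → ℕ) (x : Γ) (k : ℕ) (u v : Γ) : Prop :=
  (u ≤ x ∧ rk u = k) ∧ (v ≤ x ∧ rk v = k) ∧ ∃ b, b ≤ x ∧ rk b + 1 = k ∧ b < u ∧ b < v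

lemma DUrel.symm' {rk : Γ → ℕ} {x : Γ} {k : ℕ} {u v : Γ} (h : DUrel rk x k u v) :
    DUrel rk x k v u := by
  obtain ⟨h1, h2, b, hb1, hb2, hb3, hb4⟩ := h
  exact ⟨h2, h1, b, hb1, hb2, hb4, hb3⟩

lemma rtg_symm {α : Type*} {r : α → α → Prop} (hs : ∀ u v, r u v → r v u) {a b : α}
    (h : Relation.ReflTransGen r a b) : Relation.ReflTransGen r b a := by
  induction h with
  | refl => exact .refl
  | tail _ hbc ih => exact Relation.ReflTransGen.head (hs _ _ hbc) ih

lemma rk_lt_of_lt (rk : Γ → ℕ) (hrk : IsRanked rk) :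
    ∀ b a : Γ, a < b → rk a < rk b := by
  intro b
  induction b using WellFoundedLT.induction with
  | ind b ih =>
    intro a hab
    obtain ⟨c, hac, hcb⟩ := exists_le_covBy_of_lt hab
    have hbc : rk b = rk c + 1 := hrk.2 c b hcb
    rcases eq_or_lt_of_le hac with rfl | hlt
    · omega
    · have := ih c hcb.lt a hlt
      omega

/-- Any two elements of `S_c(1)` are connected by a down-up chain inside `[⊥, x]`. -/
lemma within_cover (rk : Γ → ℕ) (hrk : IsRanked rk) (hU : Uniform rk) (x : Γ) (k : ℕ)
    {c : Γ} (hc : c ≤ x) (hck : rk c = k + 1) {u v : Γ}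
    (hu : u ∈ rankSet rk c 1) (hv : v ∈ rankSet rk c 1) :
    Relation.ReflTransGen (DUrel rk x k) u v := by
  have h := hU c u v hu hv
  clear hu hv
  induction h with
  | rel p q hpq =>
    obtain ⟨hp, hq, b, hbp, hbq⟩ := hpq
    have hpk : rk p = k := by have := hp.2; omega
    have hqk : rk q = k := by have := hq.2; omega
    have hbk : rk b + 1 = k := by have := hbp.2; omega
    refine Relation.ReflTransGen.single ⟨⟨hp.1.trans hc, hpk⟩, ⟨hq.1.trans hc, hqk⟩,
      b, (hbp.1.trans hp.1).trans hc, hbk, ?_, ?_⟩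
    · exact lt_of_le_of_ne hbp.1 (by intro h; rw [h] at hbk; omega)
    · exact lt_of_le_of_ne hbq.1 (by intro h; rw [h] at hbk; omega)
  | refl => exact .refl
  | symm p q _ ih => exact rtg_symm (fun _ _ h => h.symm') ih
  | trans p q r _ _ ih1 ih2 => exact ih1.trans ih2

lemma bridge (rk : Γ → ℕ) (hrk : IsRanked rk) (hU : Uniform rk) (x : Γ) (k : ℕ)
    {c c' : Γ} (h : Relation.ReflTransGen (DUrel rk x (k + 1)) c c') :
    c ≤ x → rk c = k + 1 → ∀ a a' : Γ, a < c → a' < c' → rk a = k → rk a' = k →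
      Relation.ReflTransGen (DUrel rk x k) a a' := by
  induction h using Relation.ReflTransGen.head_induction_on with
  | refl =>
    intro hc hck a a' hac ha'c hak ha'k
    exact within_cover rk hrk hU x k hc hck ⟨hac.le, by omega⟩ ⟨ha'c.le, by omega⟩
  | head hstep _ ih =>
    rename_i c c₁ _
    intro hc hck a a' hac ha'c hak ha'k
    obtain ⟨h1, h2, e, hex, hek, hec, hec₁⟩ := hstep
    have h₁ : Relation.ReflTransGen (DUrel rk x k) a e :=
      within_cover rk hrk hU x k hc hck ⟨hac.le, by omega⟩ ⟨hec.le, by omega⟩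
    have h₂ := ih h2.1 h2.2 e a' hec₁ ha'c (by omega) ha'k
    exact h₁.trans h₂

lemma key (rk : Γ → ℕ) (hrk : IsRanked rk) (hU : Uniform rk) (x : Γ) :
    ∀ m k : ℕ, k + m = rk x → ∀ a a' : Γ, a ≤ x → a' ≤ x → rk a = k → rk a' = k →
      Relation.ReflTransGen (DUrel rk x k) a a' := by
  intro m
  induction m with
  | zero =>
    intro k hk a a' ha ha' hak ha'k
    have h1 : a = x := by
      rcases eq_or_lt_of_le ha with h | h
      · exact h
      · have := rk_lt_of_lt rk hrk x a h; omega
    have h2 : a' = x := by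
      rcases eq_or_lt_of_le ha' with h | h
      · exact h
      · have := rk_lt_of_lt rk hrk x a' h; omega
    rw [h1, h2]
  | succ m ih =>
    intro k hk a a' ha ha' hak ha'k
    have hax : a < x := lt_of_le_of_ne ha (by rintro rfl; omega)
    have ha'x : a' < x := lt_of_le_of_ne ha' (by rintro rfl; omega)
    obtain ⟨c, hac, hcx⟩ := exists_covBy_le_of_lt hax
    obtain ⟨c', ha'c, hc'x⟩ := exists_covBy_le_of_lt ha'x
    have hrc : rk c = k + 1 := by rw [hrk.2 a c hac, hak]
    have hrc' : rk c' = k + 1 := by rw [hrk.2 a' c' ha'c, ha'k]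
    have hchain := ih (k + 1) (by omega) c c' hcx hc'x hrc hrc'
    exact bridge rk hrk hU x k hchain hcx hrc a a' hac.lt ha'c.lt hak ha'k

lemma toFin (rk : Γ → ℕ) (x : Γ) (k : ℕ) {a a' : Γ}
    (h : Relation.ReflTransGen (DUrel rk x k) a a') (ha : a ≤ x) (hka : rk a = k) :
    ∃ (n : ℕ) (aa : Fin (n + 1) → Γ) (bb : Fin n → Γ),
      aa 0 = a ∧ aa (Fin.last n) = a' ∧
      (∀ i, aa i ≤ x ∧ rk (aa i) = k) ∧
      (∀ i : Fin n, bb i ≤ x ∧ rk (bb i) + 1 = k ∧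
        bb i < aa i.castSucc ∧ bb i < aa i.succ) := by
  induction h with
  | refl => exact ⟨0, fun _ => a, Fin.elim0, rfl, rfl, fun _ => ⟨ha, hka⟩, fun i => i.elim0⟩
  | @tail b c hab hbc ih =>
    obtain ⟨n, aa, bb, h0, hl, hA, hB⟩ := ih
    obtain ⟨hb, hc, w, hwx, hwk, hwb, hwc⟩ := hbc
    refine ⟨n + 1, Fin.snoc aa c, Fin.snoc bb w, ?_, ?_, ?_, ?_⟩
    · rw [← Fin.castSucc_zero, Fin.snoc_castSucc]; exact h0
    · rw [Fin.snoc_last]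
    · intro i
      refine Fin.lastCases ?_ ?_ i
      · rw [Fin.snoc_last]; exact hc
      · intro j; rw [Fin.snoc_castSucc]; exact hA j
    · intro i
      refine Fin.lastCases ?_ ?_ i
      · rw [Fin.snoc_last]
        refine ⟨hwx, hwk, ?_, ?_⟩
        · rw [Fin.snoc_castSucc, hl]; exact hwb
        · rw [Fin.succ_last, Fin.snoc_last]; exact hwc
      · intro j
        rw [Fin.snoc_castSucc, Fin.snoc_castSucc, Fin.succ_castSucc, Fin.snoc_castSucc]
        exact hB j

/-- Lemma 2.3(1).  Let `Γ` be a uniform ranked poset of rank `d` and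
fix `x` of rank `d`.  For any `a, a'` in `Γ_x = [⊥, x]` with `rk a = rk a' = k`, there
is a down-up sequence from `a` to `a'` all of whose members lie in `Γ_x`:
elements `a = a_0, a_1, …, a_n = a'` of rank `k` and elements `b_1, …, b_n` of
rank `k - 1` with `b_i < a_{i-1}` and `b_i < a_i` for all `i`. -/
theorem downUp_in_interval (rk : Γ → ℕ) (hrk : IsRanked rk) (hU : Uniform rk)
    (d : ℕ) (hd : ∀ y : Γ, rk y ≤ d) (x : Γ) (hx : rk x = d)
    (k : ℕ) (a a' : Γ) (ha : a ≤ x) (ha' : a' ≤ x)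
    (hka : rk a = k) (hka' : rk a' = k) :
    ∃ (n : ℕ) (aa : Fin (n + 1) → Γ) (bb : Fin n → Γ),
      aa 0 = a ∧ aa (Fin.last n) = a' ∧
      (∀ i, aa i ≤ x ∧ rk (aa i) = k) ∧
      (∀ i : Fin n, bb i ≤ x ∧ rk (bb i) + 1 = k ∧
        bb i < aa i.castSucc ∧ bb i < aa i.succ) := by
  have hkd : k ≤ d := hka ▸ hd a
  have h := key rk hrk hU x (d - k) k (by omega) a a' ha ha' hka hka'
  exact toFin rk x k h ha hka
end

section
/- Let Γ be a uniform ranked poset of rank d and fix an element x of rank d. Then for any two elements a, a′ of the interval Γ_x with rk(a) = rk(a′) = k, there exists an up-down sequence from a to a′ all of whose members (both the rank-k elements and the rank-(k+1) elements) lie in Γ_x. -/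
set_option linter.unusedSectionVars false
set_option linter.unusedVariables false

open scoped Classical

variable {Γ : Type*} [PartialOrder Γ] [OrderBot Γ] [Fintype Γ]

/-! Induct on `rk x - k`. Cover `a` and `a'` by elements `b, b'` of rank `k + 1` below `x`;
by induction they are joined by an up-down sequence at rank `k + 1` inside `Γ_x`, which is then
pushed down one rank. Consecutive members of that sequence lie below a common `c ≤ x` of rank
`k + 2`, and uniformity at `c` joins them by a chain of rank-`(k + 1)` elements below `c` in which
neighbours share a lower element of rank `k`; these shared elements, together with the chain,
form an up-down sequence at rank `k` inside `Γ_x`. -/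

open Relation

theorem Relation.ReflTransGen.exists_fin_chain {α : Type*} {r : α → α → Prop} {a b : α}
    (h : ReflTransGen r a b) :
    ∃ (n : ℕ) (f : Fin (n + 1) → α), f 0 = a ∧ f (Fin.last n) = b ∧
      ∀ i : Fin n, r (f i.castSucc) (f i.succ) := by
  induction h using ReflTransGen.head_induction_on with
  | refl => exact ⟨0, fun _ => b, rfl, rfl, Fin.elim0⟩
  | head hac _ ih =>
    obtain ⟨n, f, rfl, hfn, hf⟩ := ih
    refine ⟨n + 1, Fin.cons _ f, rfl, by simpa using hfn, Fin.cases (by simpa) fun i => ?_⟩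
    simpa [← Fin.succ_castSucc] using hf i

section

variable {α : Type*} [PartialOrder α]

def UpDownAdj (rk : α → ℕ) (x : α) (k : ℕ) (u v : α) : Prop :=
  rk u = k ∧ rk v = k ∧ ∃ b, b ≤ x ∧ rk b = k + 1 ∧ u < b ∧ v < b

theorem exists_upDown_seq_of_reflTransGen {rk : α → ℕ} {x a a' : α} {k : ℕ}
    (h : ReflTransGen (UpDownAdj rk x k) a a') (ha : a ≤ x) (hka : rk a = k) :
    ∃ (n : ℕ) (aa : Fin (n + 1) → α) (bb : Fin n → α),
      aa 0 = a ∧ aa (Fin.last n) = a' ∧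
      (∀ i, aa i ≤ x ∧ rk (aa i) = k) ∧
      (∀ i : Fin n, bb i ≤ x ∧ rk (bb i) = k + 1 ∧
        aa i.castSucc < bb i ∧ aa i.succ < bb i) := by
  obtain ⟨n, aa, h0, hn, hstep⟩ := h.exists_fin_chain
  choose _ hrank bb hbb using hstep
  refine ⟨n, aa, bb, h0, hn, Fin.cases (h0 ▸ ⟨ha, hka⟩) fun i => ?_, fun i => hbb i⟩
  exact ⟨(hbb i).2.2.2.le.trans (hbb i).1, hrank i⟩

theorem mem_rankSet {rk : α → ℕ} {x y : α} {n : ℕ} :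
    y ∈ rankSet rk x n ↔ y ≤ x ∧ rk y + n = rk x :=
  Iff.rfl

theorem Uniform.reflTransGen_upDownAdj {rk : α → ℕ} (hU : Uniform rk) {x u v p q : α} {k : ℕ}
    (huv : UpDownAdj rk x (k + 1) u v) (hpu : p < u) (hp : rk p = k) (hqv : q < v)
    (hq : rk q = k) : ReflTransGen (UpDownAdj rk x k) p q := by
  obtain ⟨hu, hv, c, hcx, hc, huc, hvc⟩ := huv
  have hconn := hU c u v ⟨huc.le, by omega⟩ ⟨hvc.le, by omega⟩
  rw [← EqvGen.reflTransGen_symmGen] at hconn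
  clear hv hvc
  induction hconn generalizing q with
  | refl => exact .single ⟨hp, hq, u, huc.le.trans hcx, by omega, hpu, hqv⟩
  | tail _ hwv ih =>
    obtain ⟨hw, hv, t, htw, htv⟩ | ⟨hv, hw, t, htv, htw⟩ := hwv <;>
    · rw [mem_rankSet] at hw hv htw htv
      have ht : rk t = k := by omega
      exact (ih (htw.1.lt_of_ne (by rintro rfl; omega)) ht).tail
        ⟨ht, hq, _, hv.1.trans hcx, by omega, htv.1.lt_of_ne (by rintro rfl; omega), hqv⟩

end

namespace IsRanked

variable {α : Type*} [PartialOrder α] [OrderBot α] [LocallyFiniteOrder α] {rk : α → ℕ}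

theorem strictMono (hrk : IsRanked rk) : StrictMono rk :=
  (strictMono_iff_forall_covBy rk).2 fun a b hab => by rw [hrk.2 a b hab]; omega

theorem exists_lt_rank_eq (hrk : IsRanked rk) {m : α} {k : ℕ} (hm : rk m = k + 1) :
    ∃ z < m, rk z = k := by
  have hbot : ⊥ < m := bot_lt_iff_ne_bot.2 fun h => by rw [h, hrk.1] at hm; omega
  obtain ⟨z, -, hzm⟩ := exists_le_covBy_of_lt hbot
  exact ⟨z, hzm.lt, by have := hrk.2 z m hzm; omega⟩

theorem eq_of_le_of_rank_eq (hrk : IsRanked rk) {a b : α} (hab : a ≤ b) (h : rk a = rk b) :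
    a = b :=
  hab.eq_of_not_lt fun hlt => (hrk.strictMono hlt).ne h

theorem reflTransGen_upDownAdj_of_lt (hrk : IsRanked rk) (hU : Uniform rk) {x u v p q : α}
    {k : ℕ} (huv : ReflTransGen (UpDownAdj rk x (k + 1)) u v) (hux : u ≤ x)
    (hu : rk u = k + 1) (hpu : p < u) (hp : rk p = k) (hqv : q < v) (hq : rk q = k) :
    ReflTransGen (UpDownAdj rk x k) p q := by
  induction huv generalizing q with
  | refl => exact .single ⟨hp, hq, u, hux, hu, hpu, hqv⟩
  | tail _ hmw ih =>
    obtain ⟨z, hzm, hz⟩ := hrk.exists_lt_rank_eq hmw.1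
    exact (ih hzm hz).trans (hU.reflTransGen_upDownAdj hmw hzm hz hqv hq)

theorem reflTransGen_upDownAdj (hrk : IsRanked rk) (hU : Uniform rk) {x a a' : α}
    (ha : a ≤ x) (ha' : a' ≤ x) (haa' : rk a = rk a') :
    ReflTransGen (UpDownAdj rk x (rk a)) a a' := by
  obtain ⟨n, hn⟩ := Nat.exists_eq_add_of_le (hrk.strictMono.monotone ha)
  induction n generalizing a a' with
  | zero =>
    rw [hrk.eq_of_le_of_rank_eq ha hn.symm, hrk.eq_of_le_of_rank_eq ha' (by omega)]
  | succ n ih =>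
    obtain ⟨b, hab, hbx⟩ := exists_covBy_le_of_lt (ha.lt_of_ne (by rintro rfl; omega))
    obtain ⟨b', hab', hbx'⟩ := exists_covBy_le_of_lt (ha'.lt_of_ne (by rintro rfl; omega))
    have hb := hrk.2 a b hab
    have hb' := hrk.2 a' b' hab'
    have hbb := ih hbx hbx' (by omega) (by omega)
    rw [hb] at hbb
    exact hrk.reflTransGen_upDownAdj_of_lt hU hbb hbx hb hab.lt rfl hab'.lt haa'.symm

end IsRanked

theorem upDown_in_interval_general (rk : Γ → ℕ) (hrk : IsRanked rk) (hU : Uniform rk)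
    (x : Γ) (k : ℕ) (a a' : Γ) (ha : a ≤ x) (ha' : a' ≤ x)
    (hka : rk a = k) (hka' : rk a' = k) :
    ∃ (n : ℕ) (aa : Fin (n + 1) → Γ) (bb : Fin n → Γ),
      aa 0 = a ∧ aa (Fin.last n) = a' ∧
      (∀ i, aa i ≤ x ∧ rk (aa i) = k) ∧
      (∀ i : Fin n, bb i ≤ x ∧ rk (bb i) = k + 1 ∧
        aa i.castSucc < bb i ∧ aa i.succ < bb i) := by
  let _ := Fintype.toLocallyFiniteOrder (α := Γ)
  subst hka
  exact exists_upDown_seq_of_reflTransGen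
    (hrk.reflTransGen_upDownAdj hU ha ha' hka'.symm) ha rfl

/-- Lemma 2.3(2).  Let `Γ` be a uniform ranked poset of rank `d` and
fix `x` of rank `d`.  For any `a, a'` in `Γ_x = [⊥, x]` with `rk a = rk a' = k`, there
is an up-down sequence from `a` to `a'` all of whose members lie in `Γ_x`:
elements `a = a_0, a_1, …, a_n = a'` of rank `k` and elements `b_1, …, b_n` of
rank `k + 1` with `a_{i-1} < b_i` and `a_i < b_i` for all `i`. -/
theorem upDown_in_interval (rk : Γ → ℕ) (hrk : IsRanked rk) (hU : Uniform rk)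
    (d : ℕ) (hd : ∀ y : Γ, rk y ≤ d) (x : Γ) (hx : rk x = d)
    (k : ℕ) (a a' : Γ) (ha : a ≤ x) (ha' : a' ≤ x)
    (hka : rk a = k) (hka' : rk a' = k) :
    ∃ (n : ℕ) (aa : Fin (n + 1) → Γ) (bb : Fin n → Γ),
      aa 0 = a ∧ aa (Fin.last n) = a' ∧
      (∀ i, aa i ≤ x ∧ rk (aa i) = k) ∧
      (∀ i : Fin n, bb i ≤ x ∧ rk (bb i) = k + 1 ∧
        aa i.castSucc < bb i ∧ aa i.succ < bb i) :=
  upDown_in_interval_general rk hrk hU x k a a' ha ha' hka hka'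
end

section
/- Let Γ be a ranked poset and let I = ⊕_d I_d be the graded two-sided ideal of T(W) generated by I_2 as above. For any d ≥ 2, if u_x ∈ W^{⊗(d−1)} for each x ∈ Γ′ and Σ_{x ∈ Γ′} r_x ⊗ u_x lies in I_d (the degree-d component of I), then r_x ⊗ u_x ∈ I_d for every x ∈ Γ′. -/
set_option linter.unusedSectionVars false
set_option linter.unusedVariables false

open scoped Classical

variable {Γ : Type*} [PartialOrder Γ] [OrderBot Γ] [Fintype Γ]

/-- `Γ' = Γ \ {⊥}`, indexing the generators `r_x`. -/
abbrev Vert (Γ : Type*) [PartialOrder Γ] [OrderBot Γ] := {x : Γ // x ≠ (⊥ : Γ)}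

variable (F : Type*) [Field F]

/-- The generator `r_x` of the tensor algebra `T(W)` on the vector space `W` with
basis `{r_x : x ∈ Γ'}`, realized as the free algebra on `Γ'`. -/
noncomputable def gen (x : Vert Γ) : FreeAlgebra F (Vert Γ) := FreeAlgebra.ι F x

/-- `r_x(n) = Σ_{y ∈ S_x(n)} r_y ∈ W` (which is `0` for `n ≥ rk x`). -/
noncomputable def rxn (rk : Γ → ℕ) (x : Γ) (n : ℕ) : FreeAlgebra F (Vert Γ) :=
  ∑ y ∈ Finset.univ.filter (fun y : Vert Γ => y.1 ∈ rankSet rk x n), gen F y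

/-- The quadratic relations spanning `I_2`: `r_x ⊗ r_y` for `y ∉ S_x(1)`, and
`r_x ⊗ r_x(1)`, for `x, y ∈ Γ'`. -/
inductive GRel (F : Type*) [Field F] {Γ : Type*} [PartialOrder Γ] [OrderBot Γ]
    [Fintype Γ] (rk : Γ → ℕ) :
    FreeAlgebra F (Vert Γ) → FreeAlgebra F (Vert Γ) → Prop
  | mono (x y : Vert Γ) (h : y.1 ∉ rankSet rk x.1 1) : GRel F rk (gen F x * gen F y) 0
  | adj (x : Vert Γ) : GRel F rk (gen F x * rxn F rk x.1 1) 0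

/-- The quadratic algebra `R(Γ) = T(W)/I`, where `I` is the two-sided ideal
generated by `I_2`. -/
abbrev RGamma (rk : Γ → ℕ) := RingQuot (GRel F rk)

/-- The image of `r_x` in `R(Γ)`. -/
noncomputable def rbar (rk : Γ → ℕ) (x : Vert Γ) : RGamma F rk :=
  RingQuot.mkAlgHom F (GRel F rk) (gen F x)

/-- The image of `r_x(n)` in `R(Γ)`. -/
noncomputable def rxnbar (rk : Γ → ℕ) (x : Γ) (n : ℕ) : RGamma F rk :=
  RingQuot.mkAlgHom F (GRel F rk) (rxn F rk x n)

/-- The right ideal `r_x R = {r_x · s : s ∈ R}`, as an `F`-submodule of `R(Γ)`. -/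
noncomputable def rIdeal (rk : Γ → ℕ) (x : Vert Γ) : Submodule F (RGamma F rk) :=
  LinearMap.range (LinearMap.mulLeft F (rbar F rk x))

/-- `H_x(n) = Σ_{y ∈ Γ', y ∉ S_x(n)} r_y R`. -/
noncomputable def Hsub (rk : Γ → ℕ) (x : Γ) (n : ℕ) : Submodule F (RGamma F rk) :=
  ⨆ (y : Vert Γ) (_ : y.1 ∉ rankSet rk x n), rIdeal F rk y

/-- The degree-one component `W` of `T(W)`: the span of the generators `r_x`. -/
noncomputable def Wsub : Submodule F (FreeAlgebra F (Vert Γ)) :=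
  Submodule.span F (Set.range (gen F (Γ := Γ)))

/-- The two-sided ideal `I = ⊕_d I_d` of `T(W)` generated by `I_2`, as an
`F`-submodule: the span of all `a·s·b` with `s` one of the quadratic relations. -/
noncomputable def Irel (rk : Γ → ℕ) : Submodule F (FreeAlgebra F (Vert Γ)) :=
  Submodule.span F {t | ∃ a b s, GRel F rk s 0 ∧ t = a * s * b}

/-!
Let `π_x` be the projection of the free algebra onto the span of the words beginning with the
letter `x`. It obeys the twisted Leibniz rule `π_x (a * b) = π_x a * b + ε(a) • π_x b`, with `ε`
the constant-term map, and `π_x (r_y * t) = [y = x] • r_y * t`. Every quadratic relation begins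
with a letter, so `π_x` maps each spanning element `a * s * b` of `I` into `I`; it also preserves
each `W^d`. Since `π_x (Σ_y r_y * u_y) = r_x * u_x`, the claim follows.
-/

namespace FreeAlgebra

variable {R X : Type*} [CommSemiring R]

theorem basisFreeMonoid_apply (m : FreeMonoid X) :
    basisFreeMonoid R X m = FreeMonoid.lift (ι R) m := by
  simp [basisFreeMonoid, equivMonoidAlgebraFreeMonoid]

noncomputable def headProj (x : X) : FreeAlgebra R X →ₗ[R] FreeAlgebra R X :=
  (basisFreeMonoid R X).constr R fun m =>
    if m.toList.head? = some x then basisFreeMonoid R X m else 0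

theorem headProj_basisFreeMonoid (x : X) (m : FreeMonoid X) :
    headProj x (basisFreeMonoid R X m) =
      if m.toList.head? = some x then basisFreeMonoid R X m else 0 :=
  (basisFreeMonoid R X).constr_basis R _ m

theorem headProj_one (x : X) : headProj (R := R) x 1 = 0 := by
  simpa [basisFreeMonoid_apply] using headProj_basisFreeMonoid (R := R) x 1

theorem headProj_ι_mul (x y : X) (t : FreeAlgebra R X) :
    headProj x (ι R y * t) = if y = x then ι R y * t else 0 := by
  have on_basis (m : FreeMonoid X) : headProj x (ι R y * basisFreeMonoid R X m) =
      if y = x then ι R y * basisFreeMonoid R X m else 0 := by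
    simpa [basisFreeMonoid_apply] using headProj_basisFreeMonoid (R := R) x (.of y * m)
  split_ifs with h
  · refine LinearMap.congr_fun ((basisFreeMonoid R X).ext
      (f₁ := (headProj x).comp (LinearMap.mulLeft R (ι R y))) (f₂ := LinearMap.mulLeft R (ι R y))
      fun m => ?_) t
    simpa [h] using on_basis m
  · refine LinearMap.congr_fun ((basisFreeMonoid R X).ext
      (f₁ := (headProj x).comp (LinearMap.mulLeft R (ι R y))) (f₂ := 0) fun m => ?_) t
    simpa [h] using on_basis m

theorem headProj_ι (x y : X) : headProj x (ι R y) = if y = x then ι R y else 0 := by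
  simpa using headProj_ι_mul (R := R) x y 1

theorem algebraMapInv_ι (y : X) : algebraMapInv (ι R y) = 0 := lift_ι_apply _ y

theorem headProj_mul (x : X) (a b : FreeAlgebra R X) :
    headProj x (a * b) = headProj x a * b + algebraMapInv a • headProj x b := by
  induction a generalizing b with
  | grade0 r => simp [Algebra.algebraMap_eq_smul_one, headProj_one]
  | grade1 y => simp [headProj_ι_mul, headProj_ι, algebraMapInv_ι, ite_mul]
  | mul a₁ a₂ h₁ h₂ =>
    rw [mul_assoc, h₁, h₂, h₁, map_mul, smul_add, mul_smul, add_mul, smul_mul_assoc, mul_assoc,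
      add_assoc]
  | add a₁ a₂ h₁ h₂ => simp [add_mul, h₁, h₂, add_smul]; abel

theorem headProj_sum_ι_mul [Fintype X] (x : X) (u : X → FreeAlgebra R X) :
    headProj x (∑ y, ι R y * u y) = ι R x * u x := by
  simp [headProj_ι_mul]

theorem headProj_mem_span_mul_mul {S : Set (FreeAlgebra R X)}
    (hS : ∀ s ∈ S, ∃ z w, s = ι R z * w) (x : X) {v : FreeAlgebra R X}
    (hv : v ∈ Submodule.span R {t | ∃ a b s, s ∈ S ∧ t = a * s * b}) :
    headProj x v ∈ Submodule.span R {t | ∃ a b s, s ∈ S ∧ t = a * s * b} := by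
  induction hv using Submodule.span_induction with
  | mem t ht =>
    obtain ⟨a, b, s, hs, rfl⟩ := ht
    obtain ⟨z, w, rfl⟩ := hS s hs
    have hsb : headProj x (ι R z * w * b) = if z = x then ι R z * w * b else 0 := by
      rw [mul_assoc, headProj_ι_mul]
    rw [mul_assoc, headProj_mul, ← mul_assoc, hsb]
    refine add_mem (Submodule.subset_span ⟨_, b, _, hs, rfl⟩) (Submodule.smul_mem _ _ ?_)
    split_ifs
    · exact Submodule.subset_span ⟨1, b, _, hs, by rw [one_mul]⟩
    · exact zero_mem _
  | zero => simp
  | add p q _ _ hp hq => rw [map_add]; exact add_mem hp hq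
  | smul c p _ hp => rw [map_smul]; exact Submodule.smul_mem _ _ hp

theorem headProj_mem_span_range_ι (x : X) {v : FreeAlgebra R X}
    (hv : v ∈ Submodule.span R (Set.range (ι R))) :
    headProj x v ∈ Submodule.span R (Set.range (ι R)) := by
  refine (Submodule.span_le (p := (Submodule.span R (Set.range (ι R))).comap (headProj x))).mpr
    ?_ hv
  rintro _ ⟨y, rfl⟩
  rw [SetLike.mem_coe, Submodule.mem_comap, headProj_ι]
  split_ifs
  · exact Submodule.subset_span ⟨y, rfl⟩
  · exact zero_mem _

theorem algebraMapInv_eq_zero_of_mem_span_range_ι {v : FreeAlgebra R X}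
    (hv : v ∈ Submodule.span R (Set.range (ι R))) : algebraMapInv v = 0 := by
  refine (Submodule.span_le (p := LinearMap.ker (algebraMapInv (R := R) (X := X)).toLinearMap)).mpr
    ?_ hv
  rintro _ ⟨y, rfl⟩
  exact algebraMapInv_ι y

theorem headProj_mem_span_range_ι_pow (x : X) (k : ℕ) {v : FreeAlgebra R X}
    (hv : v ∈ Submodule.span R (Set.range (ι R)) ^ k) :
    headProj x v ∈ Submodule.span R (Set.range (ι R)) ^ k := by
  cases k with
  | zero =>
    rw [pow_zero] at hv ⊢
    obtain ⟨r, rfl⟩ := Submodule.mem_one.mp hv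
    simp [Algebra.algebraMap_eq_smul_one, headProj_one]
  | succ k =>
    rw [pow_succ'] at hv ⊢
    refine Submodule.mul_induction_on hv (fun m hm n hn => ?_) fun p q hp hq => ?_
    · rw [headProj_mul, algebraMapInv_eq_zero_of_mem_span_range_ι hm, zero_smul, add_zero]
      exact Submodule.mul_mem_mul (headProj_mem_span_range_ι x hm) hn
    · rw [map_add]
      exact add_mem hp hq

end FreeAlgebra

theorem GRel.exists_eq_ι_mul {rk : Γ → ℕ} {s : FreeAlgebra F (Vert Γ)} (hs : GRel F rk s 0) :
    ∃ z w, s = FreeAlgebra.ι F z * w := by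
  cases hs with
  | mono z y _ => exact ⟨z, gen F y, rfl⟩
  | adj z => exact ⟨z, rxn F rk z.1 1, rfl⟩

theorem summand_mem_ideal (rk : Γ → ℕ)
    (d : ℕ) (u : Vert Γ → FreeAlgebra F (Vert Γ))
    (hsum : (∑ x : Vert Γ, gen F x * u x) ∈ Irel F rk ⊓ (Wsub F (Γ := Γ)) ^ d) :
    ∀ x : Vert Γ, gen F x * u x ∈ Irel F rk ⊓ (Wsub F (Γ := Γ)) ^ d := by
  intro x
  show FreeAlgebra.ι F x * u x ∈ _
  rw [← FreeAlgebra.headProj_sum_ι_mul x u]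
  exact ⟨FreeAlgebra.headProj_mem_span_mul_mul (fun _ => GRel.exists_eq_ι_mul F) x hsum.1,
    FreeAlgebra.headProj_mem_span_range_ι_pow x d hsum.2⟩
end

section
/- Let Γ be a uniform ranked poset and x ∈ Γ′. Then the F-algebra homomorphism R(Γ_x) → R(Γ) induced by the inclusion of the generators {r_y : y ∈ Γ_x, y ≠ 0̄} into {r_y : y ∈ Γ′} is well defined and injective. -/
set_option linter.unusedSectionVars false
set_option linter.unusedVariables false
set_option maxHeartbeats 1600000

open scoped Classical

variable {Γ : Type*} [PartialOrder Γ] [OrderBot Γ] [Fintype Γ]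

variable (F : Type*) [Field F]

/-- The inclusion of the generating set of `R(Γ_x)` into that of `R(Γ)`, where
`Γ_x = [⊥, x]` is the interval below `x`. -/
def inclVert (x : Γ) (y : Vert (Set.Iic x)) : Vert Γ :=
  ⟨y.1.1, fun h => y.2 (Subtype.ext (by simpa using h))⟩

/-! ### Auxiliary machinery for `subalgebra_embedding` -/

lemma mem_rankSet_iff {rk : Γ → ℕ} {x y : Γ} {n : ℕ} :
    y ∈ rankSet rk x n ↔ y ≤ x ∧ rk y + n = rk x := Iff.rfl

/-- Restrict a vertex `z ≤ x` of `Γ` to a vertex of the interval `[⊥, x]`. -/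
def restrictVert (x : Γ) (z : Vert Γ) (h : z.1 ≤ x) : Vert (Set.Iic x) :=
  ⟨⟨z.1, h⟩, fun hb => z.2 (by simpa using congrArg Subtype.val hb)⟩

@[simp] lemma restrictVert_inclVert (x : Γ) (w : Vert (Set.Iic x)) (h) :
    restrictVert x (inclVert x w) h = w := by
  apply Subtype.ext; apply Subtype.ext; rfl

@[simp] lemma inclVert_restrictVert (x : Γ) (z : Vert Γ) (h) :
    inclVert x (restrictVert x z h) = z := by
  apply Subtype.ext; rfl

/-- Sums over filtered universes do not depend on the `Fintype` and
`Decidable` instances, nor on the precise syntactic form of the predicate. -/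
lemma filter_univ_congr {α M : Type*} [AddCommMonoid M] (F1 F2 : Fintype α)
    (p q : α → Prop) (hp : DecidablePred p) (hq : DecidablePred q)
    (hpq : ∀ a, p a ↔ q a) (g : α → M) :
    ∑ a ∈ (@Finset.univ α F1).filter p, g a
      = ∑ a ∈ (@Finset.univ α F2).filter q, g a := by
  apply Finset.sum_congr _ (fun _ _ => rfl)
  apply Finset.ext
  intro a
  simp only [Finset.mem_filter, Finset.mem_univ, true_and]
  exact hpq a

lemma sum_reindex {M : Type*} [AddCommMonoid M] (rk : Γ → ℕ) (x u : Γ) (hu : u ≤ x)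
    (n : ℕ) (g : Vert Γ → M) :
    ∑ w ∈ Finset.univ.filter
        (fun w : Vert (Set.Iic x) =>
          w.1 ∈ rankSet (fun v : Set.Iic x => rk v.1) ⟨u, hu⟩ n),
        g (inclVert x w)
    = ∑ z ∈ Finset.univ.filter (fun z : Vert Γ => z.1 ∈ rankSet rk u n), g z := by
  refine Finset.sum_bij' (fun w _ => inclVert x w)
    (fun z hz => restrictVert x z
      (le_trans (mem_rankSet_iff.mp (Finset.mem_filter.mp hz).2).1 hu))
    ?_ ?_ ?_ ?_ ?_
  · intro w hw
    have hw' := mem_rankSet_iff.mp (Finset.mem_filter.mp hw).2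
    exact Finset.mem_filter.mpr ⟨Finset.mem_univ _, mem_rankSet_iff.mpr ⟨hw'.1, hw'.2⟩⟩
  · intro z hz
    have hz' := mem_rankSet_iff.mp (Finset.mem_filter.mp hz).2
    exact Finset.mem_filter.mpr ⟨Finset.mem_univ _, mem_rankSet_iff.mpr ⟨hz'.1, hz'.2⟩⟩
  · intro w hw; exact restrictVert_inclVert x w _
  · intro z hz; exact inclVert_restrictVert x z _
  · intro w hw; rfl

/-- Lemma 3.3.  Let `Γ` be a uniform ranked poset and `x ∈ Γ'`.
The `F`-algebra homomorphism `R(Γ_x) → R(Γ)` induced by the inclusion of the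
generators `{r_y : y ∈ Γ_x, y ≠ ⊥}` into `{r_y : y ∈ Γ'}` is well defined
(it exists) and is injective. -/
theorem subalgebra_embedding (rk : Γ → ℕ) (hrk : IsRanked rk) (hU : Uniform rk)
    (x : Vert Γ) :
    ∃ φ : RGamma F (fun y : Set.Iic x.1 => rk y.1) →ₐ[F] RGamma F rk,
      (∀ y : Vert (Set.Iic x.1),
        φ (rbar F (fun z : Set.Iic x.1 => rk z.1) y) = rbar F rk (inclVert x.1 y)) ∧
      Function.Injective φ := by
  classical
  set rk' : Set.Iic x.1 → ℕ := fun y => rk y.1 with hrk'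
  -- the forward map on the free algebra
  set φ0 : FreeAlgebra F (Vert (Set.Iic x.1)) →ₐ[F] RGamma F rk :=
    FreeAlgebra.lift F (fun y => rbar F rk (inclVert x.1 y)) with hφ0def
  have hφ0gen : ∀ y, φ0 (gen F y) = rbar F rk (inclVert x.1 y) := by
    intro y; simp [hφ0def, gen]
  have hφ0rxn : ∀ (u : Set.Iic x.1),
      φ0 (rxn F rk' u 1) = rxnbar F rk u.1 1 := by
    intro u
    rw [rxn, map_sum, rxnbar, rxn, map_sum]
    simp only [hφ0gen]
    exact ((filter_univ_congr _ _ _ _ _ _ (fun a => Iff.rfl) _).trans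
      ((sum_reindex rk x.1 u.1 u.2 1 (rbar F rk)).trans
        (filter_univ_congr _ _ _ _ _ _ (fun a => Iff.rfl) _))).trans
      (Finset.sum_congr rfl fun z _ => (rfl : rbar F rk z = _))
  have hφ0rel : ∀ ⦃a b⦄, GRel F rk' a b → φ0 a = φ0 b := by
    intro a b h
    cases h with
    | mono y z hz =>
      rw [map_mul, map_zero, hφ0gen, hφ0gen, rbar, rbar, ← map_mul]
      exact (RingQuot.mkAlgHom_rel F
        (GRel.mono (inclVert x.1 y) (inclVert x.1 z) (by
          intro hmem
          rw [mem_rankSet_iff] at hmem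
          exact hz ⟨hmem.1, hmem.2⟩))).trans (map_zero _)
    | adj y =>
      rw [map_mul, map_zero, hφ0gen, hφ0rxn y.1, rbar, rxnbar, ← map_mul]
      exact (RingQuot.mkAlgHom_rel F (GRel.adj (inclVert x.1 y))).trans (map_zero _)
  set φ : RGamma F rk' →ₐ[F] RGamma F rk :=
    RingQuot.liftAlgHom F ⟨φ0, hφ0rel⟩ with hφdef
  have hφr : ∀ y : Vert (Set.Iic x.1),
      φ (rbar F rk' y) = rbar F rk (inclVert x.1 y) := by
    intro y
    rw [rbar, hφdef, RingQuot.liftAlgHom_mkAlgHom_apply, hφ0gen]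
  -- the retraction on the free algebra
  set ψ0 : FreeAlgebra F (Vert Γ) →ₐ[F] RGamma F rk' :=
    FreeAlgebra.lift F (fun z =>
      if h : z.1 ≤ x.1 then rbar F rk' (restrictVert x.1 z h) else 0) with hψ0def
  have hψ0gen : ∀ z, ψ0 (gen F z) =
      if h : z.1 ≤ x.1 then rbar F rk' (restrictVert x.1 z h) else 0 := by
    intro z; simp [hψ0def, gen]
  have hψ0rel : ∀ ⦃a b⦄, GRel F rk a b → ψ0 a = ψ0 b := by
    intro a b h
    cases h with
    | mono u v hv =>
      rw [map_mul, map_zero, hψ0gen, hψ0gen]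
      by_cases hu : u.1 ≤ x.1
      · by_cases hvx : v.1 ≤ x.1
        · rw [dif_pos hu, dif_pos hvx, rbar, rbar, ← map_mul]
          exact (RingQuot.mkAlgHom_rel F
            (GRel.mono (restrictVert x.1 u hu) (restrictVert x.1 v hvx) (by
              intro hmem
              rw [mem_rankSet_iff] at hmem
              exact hv ⟨hmem.1, hmem.2⟩))).trans (map_zero _)
        · rw [dif_neg hvx, mul_zero]
      · rw [dif_neg hu, zero_mul]
    | adj u =>
      rw [map_mul, map_zero, hψ0gen]
      by_cases hu : u.1 ≤ x.1
      · rw [dif_pos hu]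
        have hsum : ψ0 (rxn F rk u.1 1)
            = RingQuot.mkAlgHom F (GRel F rk') (rxn F rk' ⟨u.1, hu⟩ 1) := by
          rw [rxn, map_sum, rxn, map_sum]
          have hw2 : ∀ w : Vert (Set.Iic x.1),
              ψ0 (gen F (inclVert x.1 w))
                = RingQuot.mkAlgHom F (GRel F rk') (gen F w) := by
            intro w
            rw [hψ0gen, dif_pos (show (inclVert x.1 w).1 ≤ x.1 from w.1.2),
              restrictVert_inclVert]
            rfl
          exact (filter_univ_congr _ _ _ _ _ _ (fun a => Iff.rfl) _).trans
            (((sum_reindex rk x.1 u.1 hu 1 (fun z => ψ0 (gen F z))).symm).trans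
              ((Finset.sum_congr rfl (fun w _ => hw2 w)).trans
                (filter_univ_congr _ _ _ _ _ _ (fun a => Iff.rfl) _)))
        rw [hsum, rbar, ← map_mul]
        exact (RingQuot.mkAlgHom_rel F
          (GRel.adj (restrictVert x.1 u hu))).trans (map_zero _)
      · rw [dif_neg hu, zero_mul]
  set ψ : RGamma F rk →ₐ[F] RGamma F rk' :=
    RingQuot.liftAlgHom F ⟨ψ0, hψ0rel⟩ with hψdef
  have hψφ : ∀ a, ψ (φ a) = a := by
    have : (ψ.comp φ) = AlgHom.id F (RGamma F rk') := by
      apply RingQuot.ringQuot_ext'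
      apply FreeAlgebra.hom_ext
      funext y
      simp only [AlgHom.coe_comp, Function.comp_apply]
      have h1 : (RingQuot.mkAlgHom F (GRel F rk')) (FreeAlgebra.ι F y)
          = rbar F rk' y := rfl
      rw [h1, hφr y, rbar, hψdef, RingQuot.liftAlgHom_mkAlgHom_apply, hψ0gen,
        dif_pos (show (inclVert x.1 y).1 ≤ x.1 from y.1.2), restrictVert_inclVert]
      rfl
    intro a
    have := congrArg (fun f => (f : RGamma F rk' →ₐ[F] RGamma F rk') a) this
    simpa using this
  exact ⟨φ, hφr, Function.LeftInverse.injective hψφ⟩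
end

section
/- Let Γ be a uniform ranked poset, R = R(Γ), x ∈ Γ′ and n ≥ 0. Then in R: (1) r_x(n)·r_x(n+1) = 0; (2) r_x(n)·r_z = 0 for every z ∈ Γ′ with z ∉ S_x(n+1). Consequently r_x(n+1)R + H_x(n+1) ⊆ rann_R(r_x(n)). -/
set_option linter.unusedSectionVars false
set_option linter.unusedVariables false

open scoped Classical

variable {Γ : Type*} [PartialOrder Γ] [OrderBot Γ] [Fintype Γ]

variable (F : Type*) [Field F]

lemma mono_zero (rk : Γ → ℕ) (y z : Vert Γ) (h : z.1 ∉ rankSet rk y.1 1) :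
    rbar F rk y * rbar F rk z = 0 := by
  have := RingQuot.mkAlgHom_rel F (GRel.mono (F := F) (rk := rk) y z h)
  simpa [rbar, map_mul] using this

lemma adj_zero (rk : Γ → ℕ) (y : Vert Γ) :
    rbar F rk y * rxnbar F rk y.1 1 = 0 := by
  have := RingQuot.mkAlgHom_rel F (GRel.adj (F := F) (rk := rk) y)
  simpa [rbar, rxnbar, map_mul] using this

lemma rxnbar_eq_sum (rk : Γ → ℕ) (x : Γ) (n : ℕ) :
    rxnbar F rk x n =
      ∑ z ∈ Finset.univ.filter (fun z : Vert Γ => z.1 ∈ rankSet rk x n),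
        rbar F rk z := by
  simp [rxnbar, rxn, map_sum, rbar]

lemma rankSet_one_subset (rk : Γ → ℕ) {x : Γ} {n : ℕ} {y : Γ}
    (hy : y ∈ rankSet rk x n) : rankSet rk y 1 ⊆ rankSet rk x (n + 1) := by
  intro z hz
  obtain ⟨hzy, hrz⟩ := hz
  obtain ⟨hyx, hry⟩ := hy
  exact ⟨hzy.trans hyx, by omega⟩

lemma key_zero (rk : Γ → ℕ) (x : Γ) (n : ℕ) (y : Vert Γ)
    (hy : y.1 ∈ rankSet rk x n) :
    rbar F rk y * rxnbar F rk x (n + 1) = 0 := by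
  have hsub : Finset.univ.filter (fun z : Vert Γ => z.1 ∈ rankSet rk y.1 1) ⊆
      Finset.univ.filter (fun z : Vert Γ => z.1 ∈ rankSet rk x (n + 1)) := by
    intro z hz
    simp only [Finset.mem_filter, Finset.mem_univ, true_and] at *
    exact rankSet_one_subset rk hy hz
  have hzero : ∀ z ∈ Finset.univ.filter
      (fun z : Vert Γ => z.1 ∈ rankSet rk x (n + 1)),
      z ∉ Finset.univ.filter (fun z : Vert Γ => z.1 ∈ rankSet rk y.1 1) →
      rbar F rk y * rbar F rk z = 0 := by
    intro z _ hz
    simp only [Finset.mem_filter, Finset.mem_univ, true_and] at hz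
    exact mono_zero F rk y z hz
  rw [rxnbar_eq_sum, Finset.mul_sum, ← Finset.sum_subset hsub hzero,
    ← Finset.mul_sum, ← rxnbar_eq_sum]
  exact adj_zero F rk y

/-- Let `Γ` be a uniform ranked poset, `R = R(Γ)`, `x ∈ Γ'`, `n ≥ 0`.
Then in `R`: (1) `r_x(n)·r_x(n+1) = 0`; (2) `r_x(n)·r_z = 0` for every `z ∈ Γ'` with
`z ∉ S_x(n+1)`.  Consequently `r_x(n+1)R + H_x(n+1) ⊆ rann_R(r_x(n))`. -/
theorem rxn_annihilates (rk : Γ → ℕ) (hrk : IsRanked rk) (hU : Uniform rk)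
    (x : Vert Γ) (n : ℕ) :
    rxnbar F rk x.1 n * rxnbar F rk x.1 (n + 1) = 0 ∧
    (∀ z : Vert Γ, z.1 ∉ rankSet rk x.1 (n + 1) →
      rxnbar F rk x.1 n * rbar F rk z = 0) ∧
    (∀ s : RGamma F rk,
      s ∈ LinearMap.range (LinearMap.mulLeft F (rxnbar F rk x.1 (n + 1)))
            ⊔ Hsub F rk x.1 (n + 1) →
      rxnbar F rk x.1 n * s = 0) := by
  have h2 : ∀ z : Vert Γ, z.1 ∉ rankSet rk x.1 (n + 1) →
      rxnbar F rk x.1 n * rbar F rk z = 0 := by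
    intro z hz
    rw [rxnbar_eq_sum, Finset.sum_mul]
    refine Finset.sum_eq_zero fun y hy => ?_
    simp only [Finset.mem_filter, Finset.mem_univ, true_and] at hy
    refine mono_zero F rk y z fun hzy => hz ?_
    exact rankSet_one_subset rk hy hzy
  have h1 : rxnbar F rk x.1 n * rxnbar F rk x.1 (n + 1) = 0 := by
    rw [rxnbar_eq_sum F rk x.1 n, Finset.sum_mul]
    refine Finset.sum_eq_zero fun y hy => ?_
    simp only [Finset.mem_filter, Finset.mem_univ, true_and] at hy
    exact key_zero F rk x.1 n y hy
  refine ⟨h1, h2, ?_⟩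
  intro s hs
  have hK : LinearMap.range (LinearMap.mulLeft F (rxnbar F rk x.1 (n + 1)))
        ⊔ Hsub F rk x.1 (n + 1)
      ≤ LinearMap.ker (LinearMap.mulLeft F (rxnbar F rk x.1 n)) := by
    apply sup_le
    · intro u hu
      rw [LinearMap.mem_range] at hu
      obtain ⟨t, rfl⟩ := hu
      simp only [LinearMap.mem_ker, LinearMap.mulLeft_apply]
      rw [← mul_assoc, h1, zero_mul]
    · refine iSup_le fun y => iSup_le fun hy => ?_
      intro u hu
      rw [rIdeal, LinearMap.mem_range] at hu
      obtain ⟨t, rfl⟩ := hu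
      simp only [LinearMap.mem_ker, LinearMap.mulLeft_apply]
      rw [← mul_assoc, h2 y hy, zero_mul]
  exact LinearMap.mem_ker.mp (hK hs)
end

section
/- Let Γ be a uniform ranked poset, R = R(Γ) and x ∈ Γ′. Then the right annihilator of r_x in R is rann_R(r_x) = r_x(1)R ⊕ H_x(1), and this sum is direct. (This formula holds unconditionally, whether or not R(Γ) is Koszul.) -/
set_option linter.unusedSectionVars false
set_option linter.unusedVariables false

open scoped Classical

variable {Γ : Type*} [PartialOrder Γ] [OrderBot Γ] [Fintype Γ]

variable (F : Type*) [Field F]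

/-!
Write `∂_z` for the left partial derivative of the free algebra `T(W)`, so that
`a = ε(a) + ∑_z r_z ∂_z(a)`, and it obeys `∂_z(ab) = ∂_z(a) b + ε(a) ∂_z(b)`.
Every defining relation is `r_u k` with `k ∈ K_u := {r_u(1)} ∪ {r_y : y ∉ S_u(1)}`, so the
Leibniz rule shows that `∂_z` maps the ideal `I` into `K_z T(W) + I`. Applied to `r_x s ∈ I`
this gives `rann(r_x) = K_x R`. If `r_x(1) s ∈ H_x(1)`, lift to `r_x(1) s - t ∈ I` with
`t ∈ ∑_{y ∉ S_x(1)} r_y T(W)`; for `v ∈ S_x(1)`, `∂_v` kills `t` and returns `s`, so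
`s ∈ K_v R = rann(r_v)` and `r_x(1) s = ∑_v r_v s = 0`.
-/

namespace FreeAlgebra

variable {R : Type*} [CommSemiring R] {X : Type*}

noncomputable def lDeriv (z : X) : FreeAlgebra R X →ₗ[R] FreeAlgebra R X :=
  (basisFreeMonoid R X).repr.symm.toLinearMap ∘ₗ
    Finsupp.lcomapDomain (FreeMonoid.of z * ·) (mul_right_injective _) ∘ₗ
      (basisFreeMonoid R X).repr.toLinearMap

theorem basisFreeMonoid_repr_apply (a : FreeAlgebra R X) (w : FreeMonoid X) :
    (basisFreeMonoid R X).repr a w = (equivMonoidAlgebraFreeMonoid a).coeff w := rfl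

theorem basisFreeMonoid_repr_lDeriv (z : X) (a : FreeAlgebra R X) (w : FreeMonoid X) :
    (basisFreeMonoid R X).repr (lDeriv z a) w = (basisFreeMonoid R X).repr a (.of z * w) := by
  simp [lDeriv]

theorem lDeriv_one (z : X) : lDeriv z (1 : FreeAlgebra R X) = 0 := by
  refine (basisFreeMonoid R X).repr.injective (Finsupp.ext fun w => ?_)
  rw [basisFreeMonoid_repr_lDeriv, basisFreeMonoid_repr_apply, map_one]
  simp [MonoidAlgebra.one_def]

theorem lDeriv_ι_mul (z y : X) (a : FreeAlgebra R X) :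
    lDeriv z (ι R y * a) = if y = z then a else 0 := by
  refine (basisFreeMonoid R X).repr.injective (Finsupp.ext fun w => ?_)
  have hι : equivMonoidAlgebraFreeMonoid (ι R y : FreeAlgebra R X) =
      MonoidAlgebra.single (FreeMonoid.of y) 1 := by
    simp [equivMonoidAlgebraFreeMonoid]
  rw [basisFreeMonoid_repr_lDeriv, basisFreeMonoid_repr_apply (ι R y * a),
    map_mul equivMonoidAlgebraFreeMonoid, hι]
  split_ifs with h
  · subst h
    rw [MonoidAlgebra.coeff_single_mul_eq_mul_coeff w (fun _ _ => mul_right_inj _), one_mul]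
    rfl
  · rw [MonoidAlgebra.coeff_single_mul_of_forall_mul_ne, map_zero, Finsupp.zero_apply]
    intro d hd
    exact h (by simpa using congrArg FreeMonoid.toList hd : y = z ∧ d = w).1

theorem lDeriv_ι (z y : X) : lDeriv z (ι R y : FreeAlgebra R X) = if y = z then 1 else 0 := by
  simpa using lDeriv_ι_mul (R := R) z y 1

theorem lDeriv_mul (z : X) (a b : FreeAlgebra R X) :
    lDeriv z (a * b) = lDeriv z a * b + algebraMapInv a • lDeriv z b := by
  induction a generalizing b with
  | grade0 r => simp [Algebra.algebraMap_eq_smul_one, lDeriv_one]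
  | grade1 y => simp [lDeriv_ι_mul, lDeriv_ι, algebraMapInv]
  | mul a c iha ihc => simp [mul_assoc, iha, ihc, add_mul, smul_add, mul_smul, add_assoc]
  | add a c iha ihc => simp [add_mul, iha, ihc, add_smul]; abel

theorem lDeriv_sum_ι_mul (z : X) (V : Finset X) (a : FreeAlgebra R X) :
    lDeriv z (∑ v ∈ V, ι R v * a) = if z ∈ V then a else 0 := by
  simp [map_sum, lDeriv_ι_mul, Finset.sum_ite_eq']

theorem iSup_range_mulLeft_ι_le_ker_lDeriv {p : X → Prop} {z : X} (hz : ¬p z) :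
    ⨆ (y) (_ : p y), LinearMap.range (LinearMap.mulLeft R (ι R y : FreeAlgebra R X)) ≤
      LinearMap.ker (lDeriv z) := by
  refine iSup₂_le fun y hy => ?_
  rintro _ ⟨a, rfl⟩
  rw [LinearMap.mem_ker, LinearMap.mulLeft_apply, lDeriv_ι_mul,
    if_neg (by rintro rfl; exact hz hy)]

end FreeAlgebra

theorem RingQuot.ker_mkRingHom {A : Type*} [Ring A] (s : A → A → Prop) :
    TwoSidedIdeal.ker (RingQuot.mkRingHom s) =
      TwoSidedIdeal.span {x | ∃ p q, s p q ∧ p - q = x} := by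
  refine le_antisymm (fun a ha => ?_) (TwoSidedIdeal.span_le.2 ?_)
  · have hrel : RingConGen.Rel s a 0 := by
      rw [TwoSidedIdeal.mem_ker, ← map_zero (RingQuot.mkRingHom s), RingQuot.mkRingHom_def] at ha
      rw [← RingQuot.eqvGen_rel_eq]
      exact Quot.eqvGen_exact (congrArg RingQuot.toQuot ha)
    have hle : ringConGen s ≤ (TwoSidedIdeal.span {x | ∃ p q, s p q ∧ p - q = x}).ringCon :=
      RingCon.ringConGen_le.2 fun p q hpq =>
        (TwoSidedIdeal.rel_iff _ p q).2 (TwoSidedIdeal.subset_span ⟨p, q, hpq, rfl⟩)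
    simpa [TwoSidedIdeal.rel_iff] using hle hrel
  · rintro _ ⟨p, q, hpq, rfl⟩
    rw [SetLike.mem_coe, TwoSidedIdeal.mem_ker, map_sub, RingQuot.mkRingHom_rel hpq, sub_self]

theorem mul_mem_iSup_range_mulLeft {R A : Type*} [CommSemiring R] [Semiring A] [Algebra R A]
    {S : Set A} {a : A} (ha : a ∈ ⨆ k ∈ S, LinearMap.range (LinearMap.mulLeft R k)) (b : A) :
    a * b ∈ ⨆ k ∈ S, LinearMap.range (LinearMap.mulLeft R k) := by
  suffices h : ⨆ k ∈ S, LinearMap.range (LinearMap.mulLeft R k) ≤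
      (⨆ k ∈ S, LinearMap.range (LinearMap.mulLeft R k)).comap (LinearMap.mulRight R b) from
    h ha
  refine iSup₂_le fun k hk => ?_
  rintro _ ⟨c, rfl⟩
  exact Submodule.mem_iSup_of_mem k (Submodule.mem_iSup_of_mem hk ⟨c * b, by simp [mul_assoc]⟩)

theorem range_mulLeft_apply_of_surjective {R A B : Type*} [CommSemiring R] [Semiring A]
    [Algebra R A] [Semiring B] [Algebra R B] {f : A →ₐ[R] B} (hf : Function.Surjective f)
    (a : A) :
    LinearMap.range (LinearMap.mulLeft R (f a)) =
      (LinearMap.range (LinearMap.mulLeft R a)).map f.toLinearMap := by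
  calc LinearMap.range (LinearMap.mulLeft R (f a))
      = LinearMap.range (LinearMap.mulLeft R (f a) ∘ₗ f.toLinearMap) :=
        (LinearMap.range_comp_of_range_eq_top _ (LinearMap.range_eq_top.2 hf)).symm
    _ = LinearMap.range (f.toLinearMap ∘ₗ LinearMap.mulLeft R a) :=
        congrArg LinearMap.range (LinearMap.ext fun b => by simp)
    _ = _ := LinearMap.range_comp _ _

namespace FreeAlgebra

variable {R : Type*} [CommRing R] {X : Type*} {s : FreeAlgebra R X → FreeAlgebra R X → Prop}
  {Q : X → Set (FreeAlgebra R X)}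

local notation "π" => RingQuot.mkAlgHom R s

theorem mkAlgHom_lDeriv_mem_of_eq_zero
    (hs : ∀ p q, s p q → ∃ u, ∃ k ∈ Q u, p - q = ι R u * k)
    {a : FreeAlgebra R X} (ha : π a = 0) (z : X) :
    π (lDeriv z a) ∈ ⨆ k ∈ π '' Q z, LinearMap.range (LinearMap.mulLeft R k) := by
  have hI : TwoSidedIdeal.span {x | ∃ p q, s p q ∧ p - q = x} ≤ TwoSidedIdeal.ker π := by
    rw [← RingQuot.ker_mkRingHom, ← RingQuot.mkAlgHom_coe R s]
    rfl
  have hε : TwoSidedIdeal.span {x | ∃ p q, s p q ∧ p - q = x} ≤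
      TwoSidedIdeal.ker (algebraMapInv : FreeAlgebra R X →ₐ[R] R) := by
    refine TwoSidedIdeal.span_le.2 ?_
    rintro _ ⟨p, q, hpq, rfl⟩
    obtain ⟨u, k, -, he⟩ := hs p q hpq
    rw [SetLike.mem_coe, TwoSidedIdeal.mem_ker, he, map_mul]
    simp [algebraMapInv]
  have ha' : a ∈ TwoSidedIdeal.span {x | ∃ p q, s p q ∧ p - q = x} := by
    rw [← RingQuot.ker_mkRingHom, TwoSidedIdeal.mem_ker, ← RingQuot.mkAlgHom_coe R s]
    exact ha
  clear ha
  induction ha' using TwoSidedIdeal.span_induction with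
  | mem x hx =>
    obtain ⟨p, q, hpq, rfl⟩ := hx
    obtain ⟨u, k, hk, he⟩ := hs p q hpq
    rw [he, lDeriv_ι_mul]
    split_ifs with h
    · subst h
      exact Submodule.mem_iSup_of_mem (π k)
        (Submodule.mem_iSup_of_mem ⟨k, hk, rfl⟩ ⟨1, mul_one _⟩)
    · simp
  | zero => simp
  | add x y _ _ hx hy => simpa using add_mem hx hy
  | neg x _ hx => simpa using neg_mem hx
  | left_absorb b x hx ih =>
    rw [lDeriv_mul, map_add, map_mul, (TwoSidedIdeal.mem_ker _).1 (hI hx), mul_zero, zero_add,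
      map_smul]
    exact Submodule.smul_mem _ _ ih
  | right_absorb b x hx ih =>
    rw [lDeriv_mul, (TwoSidedIdeal.mem_ker _).1 (hε hx), zero_smul, add_zero, map_mul]
    exact mul_mem_iSup_range_mulLeft ih _

theorem ker_mulLeft_mkAlgHom_ι (hs : ∀ p q, s p q → ∃ u, ∃ k ∈ Q u, p - q = ι R u * k)
    (hQ : ∀ u, ∀ k ∈ Q u, s (ι R u * k) 0) (z : X) :
    LinearMap.ker (LinearMap.mulLeft R (π (ι R z))) =
      ⨆ k ∈ π '' Q z, LinearMap.range (LinearMap.mulLeft R k) := by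
  refine le_antisymm (fun b hb => ?_) (iSup₂_le ?_)
  · obtain ⟨a, rfl⟩ := RingQuot.mkAlgHom_surjective R s b
    rw [LinearMap.mem_ker, LinearMap.mulLeft_apply, ← map_mul] at hb
    simpa [lDeriv_ι_mul] using mkAlgHom_lDeriv_mem_of_eq_zero hs hb z
  · rintro _ ⟨k, hk, rfl⟩ _ ⟨b, rfl⟩
    rw [LinearMap.mem_ker, LinearMap.mulLeft_apply, LinearMap.mulLeft_apply, ← mul_assoc,
      ← map_mul, RingQuot.mkAlgHom_rel R (hQ z k hk), map_zero, zero_mul]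

theorem sum_mul_eq_zero_of_mem_iSup
    (hs : ∀ p q, s p q → ∃ u, ∃ k ∈ Q u, p - q = ι R u * k)
    (hQ : ∀ u, ∀ k ∈ Q u, s (ι R u * k) 0) (V : Finset X) {b : RingQuot s}
    (hb : (∑ v ∈ V, π (ι R v)) * b ∈
      ⨆ (y) (_ : y ∉ V), LinearMap.range (LinearMap.mulLeft R (π (ι R y)))) :
    (∑ v ∈ V, π (ι R v)) * b = 0 := by
  obtain ⟨a, rfl⟩ := RingQuot.mkAlgHom_surjective R s b
  simp only [range_mulLeft_apply_of_surjective (RingQuot.mkAlgHom_surjective R s),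
    ← Submodule.map_iSup] at hb
  obtain ⟨t, ht, hta⟩ := hb
  rw [AlgHom.toLinearMap_apply] at hta
  have h0 : π (∑ v ∈ V, ι R v * a - t) = 0 := by
    rw [map_sub, map_sum, hta, Finset.sum_mul]
    simp only [map_mul, sub_self]
  rw [Finset.sum_mul]
  refine Finset.sum_eq_zero fun v hv => ?_
  have hlt : lDeriv v t = 0 :=
    iSup_range_mulLeft_ι_le_ker_lDeriv (p := (· ∉ V)) (not_not.2 hv) ht
  have hmem := mkAlgHom_lDeriv_mem_of_eq_zero hs h0 v
  rwa [map_sub, lDeriv_sum_ι_mul, if_pos hv, hlt, sub_zero,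
    ← ker_mulLeft_mkAlgHom_ι hs hQ] at hmem

end FreeAlgebra

section Poset

open FreeAlgebra

-- `K_x` in the sketch above.
def relRightFactors (rk : Γ → ℕ) (x : Vert Γ) : Set (FreeAlgebra F (Vert Γ)) :=
  insert (rxn F rk x.1 1) (gen F '' {y | y.1 ∉ rankSet rk x.1 1})

variable {F}

theorem GRel.exists_sub_eq_ι_mul {rk : Γ → ℕ} {p q : FreeAlgebra F (Vert Γ)}
    (h : GRel F rk p q) :
    ∃ u, ∃ k ∈ relRightFactors F rk u, p - q = ι F u * k := by
  cases h with
  | mono x y hy => exact ⟨x, gen F y, Set.mem_insert_of_mem _ ⟨y, hy, rfl⟩, sub_zero _⟩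
  | adj x => exact ⟨x, rxn F rk x.1 1, Set.mem_insert _ _, sub_zero _⟩

theorem GRel.ι_mul_of_mem_relRightFactors {rk : Γ → ℕ} {u : Vert Γ}
    {k : FreeAlgebra F (Vert Γ)} (hk : k ∈ relRightFactors F rk u) :
    GRel F rk (ι F u * k) 0 := by
  obtain rfl | ⟨y, hy, rfl⟩ := hk
  · exact GRel.adj u
  · exact GRel.mono u y hy

end Poset

theorem rann_rx (rk : Γ → ℕ) (x : Vert Γ) :
    LinearMap.ker (LinearMap.mulLeft F (rbar F rk x)) =
      LinearMap.range (LinearMap.mulLeft F (rxnbar F rk x.1 1)) ⊔ Hsub F rk x.1 1 ∧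
    LinearMap.range (LinearMap.mulLeft F (rxnbar F rk x.1 1)) ⊓ Hsub F rk x.1 1 = ⊥ := by
  have hs := fun p q (h : GRel F rk p q) => h.exists_sub_eq_ι_mul
  have hQ := fun u k (hk : k ∈ relRightFactors F rk u) => GRel.ι_mul_of_mem_relRightFactors hk
  set π := RingQuot.mkAlgHom F (GRel F rk)
  set V := Finset.univ.filter fun y : Vert Γ => y.1 ∈ rankSet rk x.1 1
  have hrxn : rxnbar F rk x.1 1 = ∑ v ∈ V, π (FreeAlgebra.ι F v) := by
    rw [rxnbar, rxn, map_sum]; rfl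
  have hH : Hsub F rk x.1 1 =
      ⨆ (y) (_ : y ∉ V), LinearMap.range (LinearMap.mulLeft F (π (FreeAlgebra.ι F y))) := by
    simp [Hsub, rIdeal, rbar, gen, V, π]
  constructor
  · rw [rbar, gen, FreeAlgebra.ker_mulLeft_mkAlgHom_ι hs hQ, relRightFactors,
      Set.image_insert_eq, iSup_insert, Set.image_image, iSup_image]
    rfl
  · rw [eq_bot_iff]
    rintro _ ⟨⟨b, rfl⟩, hb⟩
    rw [LinearMap.mulLeft_apply, hrxn] at hb ⊢
    rw [hH] at hb
    exact FreeAlgebra.sum_mul_eq_zero_of_mem_iSup hs hQ V hb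
end

section
/- Let Γ be a uniform ranked poset, R = R(Γ), x ∈ Γ′ and 0 ≤ k < rk(x). Suppose p = Σ_{y ∈ S_x(k+1)} α_y r_y ∈ W with coefficients α_y ∈ F satisfies r_b·p = 0 in R for every b ∈ S_x(k). Then all the coefficients α_y are equal; that is, p is a scalar multiple of r_x(k+1). -/
set_option linter.unusedSectionVars false
set_option linter.unusedVariables false

open scoped Classical

variable {Γ : Type*} [PartialOrder Γ] [OrderBot Γ] [Fintype Γ]

variable (F : Type*) [Field F]

/-!
For `b ∈ S_x(k)` and `c : Γ' → F` supported on `S_b(1)` with `Σ c = 0`, the algebra map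
`R → M₃(F)`, `r_b ↦ E₀₁`, `r_w ↦ c_w E₁₂` (so `r_p r_q ↦ [p = b] c_q E₀₂`) kills the relations
and sends `r_b · p` to `(Σ α_w c_w) E₀₂`. Taking `c = δ_y - δ_z` gives `α_y = α_z` whenever `y, z`
have a common upper cover in `S_x(k)`, and uniformity, pushed down the ranks by induction on `k`,
shows that this relation connects all of `S_x(k+1)`.
-/

section RankSets

variable {rk : Γ → ℕ}

theorem ne_bot_of_mem_rankSet_one {a b : Γ} (h : a ∈ rankSet rk b 1) : b ≠ ⊥ := by
  rintro rfl
  have hab := h.2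
  rw [le_bot_iff.mp h.1] at hab
  omega

theorem mem_rankSet_add {a b c : Γ} {m n : ℕ} (hab : a ∈ rankSet rk b m)
    (hbc : b ∈ rankSet rk c n) : a ∈ rankSet rk c (n + m) :=
  ⟨hab.1.trans hbc.1, by have := hab.2; have := hbc.2; omega⟩

theorem IsRanked.strictMono_s8 (hrk : IsRanked rk) : StrictMono rk := by
  let _ : LocallyFiniteOrder Γ := Fintype.toLocallyFiniteOrder
  exact (strictMono_iff_forall_covBy rk).2 fun a b hab => by rw [hrk.2 a b hab]; omega

theorem IsRanked.eq_bot_of_rk_eq_zero (hrk : IsRanked rk) {a : Γ} (ha : rk a = 0) : a = ⊥ := by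
  by_contra hne
  have := hrk.strictMono_s8 (Ne.bot_lt hne)
  rw [hrk.1, ha] at this
  exact lt_irrefl 0 this

theorem IsRanked.eq_bot_iff_of_rk_eq (hrk : IsRanked rk) {a b : Γ} (hab : rk a = rk b) :
    a = ⊥ ↔ b = ⊥ := by
  have := hrk.1
  constructor <;> rintro rfl <;> exact hrk.eq_bot_of_rk_eq_zero (by omega)

theorem IsRanked.exists_mem_rankSet_one (hrk : IsRanked rk) {b : Γ} (hb : b ≠ ⊥) :
    ∃ w, w ∈ rankSet rk b 1 := by
  let _ : LocallyFiniteOrder Γ := Fintype.toLocallyFiniteOrder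
  obtain ⟨w, -, hwb⟩ := exists_le_covBy_of_lt (Ne.bot_lt hb)
  exact ⟨w, hwb.le, (hrk.2 _ _ hwb).symm⟩

theorem IsRanked.exists_mem_rankSet_of_mem_rankSet_succ (hrk : IsRanked rk) {a u : Γ} {n : ℕ}
    (hu : u ∈ rankSet rk a (n + 1)) : ∃ b ∈ rankSet rk a n, u ∈ rankSet rk b 1 := by
  let _ : LocallyFiniteOrder Γ := Fintype.toLocallyFiniteOrder
  have hua : u < a := hu.1.lt_of_ne (by rintro rfl; have := hu.2; omega)
  obtain ⟨b, hub, hba⟩ := exists_covBy_le_of_lt hua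
  have hrb := hrk.2 _ _ hub
  exact ⟨b, ⟨hba, by have := hu.2; omega⟩, hub.le, hrb.symm⟩

/-- By induction on `k`: `β ∘ low`, with `low b` a lower cover of `b`, satisfies the hypothesis
at level `k`, by uniformity at each `d ∈ S_a(k)`. -/
theorem IsRanked.apply_eq_of_mem_rankSet_succ (hrk : IsRanked rk) (hU : Uniform rk)
    {X : Type*} {a : Γ} (k : ℕ) {β : Γ → X}
    (hβ : ∀ b ∈ rankSet rk a k, ∀ u ∈ rankSet rk b 1, ∀ v ∈ rankSet rk b 1, β u = β v)
    {u v : Γ} (hu : u ∈ rankSet rk a (k + 1)) (hv : v ∈ rankSet rk a (k + 1)) : β u = β v := by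
  induction k generalizing β u v with
  | zero => exact hβ a ⟨le_rfl, rfl⟩ u hu v hv
  | succ k ih =>
    choose! low hlow using fun b (hb : b ≠ ⊥) => hrk.exists_mem_rankSet_one hb
    have hβlow : ∀ b ∈ rankSet rk a (k + 1), ∀ w ∈ rankSet rk b 1, β w = β (low b) :=
      fun b hb w hw => hβ b hb w hw _ (hlow b (ne_bot_of_mem_rankSet_one hw))
    have hγ : ∀ d ∈ rankSet rk a k, ∀ b ∈ rankSet rk d 1, ∀ c ∈ rankSet rk d 1,
        β (low b) = β (low c) := by
      intro d hd b hb c hc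
      refine (Setoid.ker (β ∘ low)).iseqv.eqvGen_iff.mp
        (Relation.EqvGen.mono ?_ b c (hU d b c hb hc))
      rintro b' c' ⟨hb', hc', w, hwb', hwc'⟩
      calc β (low b') = β w := (hβlow b' (mem_rankSet_add hb' hd) w hwb').symm
        _ = β (low c') := hβlow c' (mem_rankSet_add hc' hd) w hwc'
    obtain ⟨b, hb, hub⟩ := hrk.exists_mem_rankSet_of_mem_rankSet_succ hu
    obtain ⟨c, hc, hvc⟩ := hrk.exists_mem_rankSet_of_mem_rankSet_succ hv
    calc β u = β (low b) := hβlow b hb u hub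
      _ = β (low c) := ih hγ hb hc
      _ = β v := (hβlow c hc v hvc).symm

end RankSets

section CoverRepresentation

variable {F} {rk : Γ → ℕ}

noncomputable def coverRep (b : Vert Γ) (c : Vert Γ → F) (w : Vert Γ) :
    Matrix (Fin 3) (Fin 3) F :=
  Matrix.single 0 1 (if w = b then 1 else 0) + Matrix.single 1 2 (c w)

theorem coverRep_mul_coverRep (b : Vert Γ) (c : Vert Γ → F) (p q : Vert Γ) :
    coverRep b c p * coverRep b c q = Matrix.single 0 2 (if p = b then c q else 0) := by
  simp [coverRep, add_mul, mul_add, Matrix.single_mul_single_same,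
    Matrix.single_mul_single_of_ne]

theorem coverRep_respects_GRel {b : Vert Γ} {c : Vert Γ → F}
    (hc : ∀ w, c w ≠ 0 → w.1 ∈ rankSet rk b.1 1) (hsum : ∑ w, c w = 0)
    ⦃u v : FreeAlgebra F (Vert Γ)⦄ (h : GRel F rk u v) :
    FreeAlgebra.lift F (coverRep b c) u = FreeAlgebra.lift F (coverRep b c) v := by
  cases h with
  | mono p q hq =>
    simp only [gen, map_mul, FreeAlgebra.lift_ι_apply, coverRep_mul_coverRep, map_zero]
    split_ifs with hp
    · subst hp
      rw [not_imp_comm.mp (hc q) hq, Matrix.single_zero]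
    · simp
  | adj p =>
    simp only [gen, rxn, map_mul, map_sum, FreeAlgebra.lift_ι_apply, Finset.mul_sum,
      coverRep_mul_coverRep, map_zero]
    split_ifs with hp
    · subst hp
      rw [← Finset.sum_filter_of_ne fun w _ => hc w] at hsum
      simpa using congrArg (Matrix.singleAddMonoidHom (0 : Fin 3) (2 : Fin 3)) hsum
    · simp

theorem sum_mul_eq_zero_of_gen_mul_eq_zero {b : Vert Γ} {c : Vert Γ → F}
    (hc : ∀ w, c w ≠ 0 → w.1 ∈ rankSet rk b.1 1) (hsum : ∑ w, c w = 0)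
    (s : Finset (Vert Γ)) (α : Vert Γ → F)
    (hann : rbar F rk b * RingQuot.mkAlgHom F (GRel F rk) (∑ w ∈ s, α w • gen F w) = 0) :
    ∑ w ∈ s, α w * c w = 0 := by
  have himage := congrArg
    (RingQuot.liftAlgHom F ⟨FreeAlgebra.lift F (coverRep b c), coverRep_respects_GRel hc hsum⟩)
    hann
  simp only [rbar, map_mul, map_sum, map_smul, map_zero, RingQuot.liftAlgHom_mkAlgHom_apply,
    gen, FreeAlgebra.lift_ι_apply, Finset.mul_sum, mul_smul_comm, coverRep_mul_coverRep,
    Matrix.smul_single, smul_eq_mul] at himage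
  simpa [Matrix.sum_apply] using congrFun (congrFun himage 0) 2

theorem coeff_eq_of_gen_mul_eq_zero {b y z : Vert Γ}
    (hy : y.1 ∈ rankSet rk b.1 1) (hz : z.1 ∈ rankSet rk b.1 1)
    {s : Finset (Vert Γ)} (hys : y ∈ s) (hzs : z ∈ s) (α : Vert Γ → F)
    (hann : rbar F rk b * RingQuot.mkAlgHom F (GRel F rk) (∑ w ∈ s, α w • gen F w) = 0) :
    α y = α z := by
  have hc : ∀ w, (Pi.single y 1 - Pi.single z 1 : Vert Γ → F) w ≠ 0 →
      w.1 ∈ rankSet rk b.1 1 := by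
    intro w hw
    by_cases hwy : w = y
    · exact hwy ▸ hy
    · by_cases hwz : w = z
      · exact hwz ▸ hz
      · simp [hwy, hwz] at hw
  have := sum_mul_eq_zero_of_gen_mul_eq_zero hc (by simp [Finset.sum_sub_distrib]) s α hann
  simpa [Pi.single_apply, mul_sub, Finset.sum_sub_distrib, hys, hzs, sub_eq_zero] using this

end CoverRepresentation

theorem coefficients_equal (rk : Γ → ℕ) (hrk : IsRanked rk) (hU : Uniform rk)
    (x : Vert Γ) (k : ℕ) (α : Vert Γ → F)
    (hann : ∀ b : Vert Γ, b.1 ∈ rankSet rk x.1 k →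
      rbar F rk b *
        RingQuot.mkAlgHom F (GRel F rk)
          (∑ y ∈ Finset.univ.filter (fun y : Vert Γ => y.1 ∈ rankSet rk x.1 (k + 1)),
            α y • gen F y) = 0) :
    ∃ c : F, ∀ y : Vert Γ, y.1 ∈ rankSet rk x.1 (k + 1) → α y = c := by
  rcases isEmpty_or_nonempty {y : Vert Γ // y.1 ∈ rankSet rk x.1 (k + 1)} with
    hempty | ⟨⟨y₀, hy₀⟩⟩
  · exact ⟨0, fun y hy => (hempty.false ⟨y, hy⟩).elim⟩
  let β : Γ → F := fun w => if hw : w = ⊥ then 0 else α ⟨w, hw⟩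
  have hβ : ∀ b ∈ rankSet rk x.1 k, ∀ u ∈ rankSet rk b 1, ∀ v ∈ rankSet rk b 1, β u = β v := by
    intro b hb u hu v hv
    have hbot : u = ⊥ ↔ v = ⊥ := hrk.eq_bot_iff_of_rk_eq (by have := hu.2; have := hv.2; omega)
    by_cases hu₀ : u = ⊥
    · simp [β, hu₀, hbot.mp hu₀]
    have hv₀ : v ≠ ⊥ := mt hbot.mpr hu₀
    simp only [β, dif_neg hu₀, dif_neg hv₀]
    exact coeff_eq_of_gen_mul_eq_zero (b := ⟨b, ne_bot_of_mem_rankSet_one hu⟩) hu hv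
      (by simpa using mem_rankSet_add hu hb) (by simpa using mem_rankSet_add hv hb) α
      (hann _ hb)
  refine ⟨α y₀, fun y hy => ?_⟩
  simpa [β, y.2, y₀.2] using hrk.apply_eq_of_mem_rankSet_succ hU k hβ hy hy₀
end

section
/- Let Γ be a uniform ranked poset whose maximum element x has rank d+1 (so Γ = Γ_x), and let R = R(Γ). For every 0 ≤ k < d, left multiplication by r_x maps R(d−1,k) onto R(d,k); that is, R(d,k) = r_x·R(d−1,k). Equivalently, H^d(R(·,k), d_Γ) = 0 for all 0 ≤ k < d. -/
set_option linter.unusedSectionVars false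
set_option linter.unusedVariables false

open scoped Classical

variable {Γ : Type*} [PartialOrder Γ] [OrderBot Γ] [Fintype Γ]

variable (F : Type*) [Field F]

/-- `d_Γ = Σ_{y ∈ Γ'} r_y ∈ R(Γ)`. -/
noncomputable def dGamma (rk : Γ → ℕ) : RGamma F rk := ∑ y : Vert Γ, rbar F rk y

/-- The graded component `R_m` of `R(Γ)`: the image of `W^{⊗m}`. -/
noncomputable def Rcomp (rk : Γ → ℕ) (m : ℕ) : Submodule F (RGamma F rk) :=
  Submodule.map (RingQuot.mkAlgHom F (GRel F rk)).toLinearMap ((Wsub F (Γ := Γ)) ^ m)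

/-- The subspace `R(n,k) = Σ_{y ∈ Γ', rk y = n+1} r_y R_{n-k}` of `R(Γ)`. -/
noncomputable def Rnk (rk : Γ → ℕ) (n k : ℕ) : Submodule F (RGamma F rk) :=
  ⨆ (y : Vert Γ) (_ : rk y.1 = n + 1),
    Submodule.map (LinearMap.mulLeft F (rbar F rk y)) (Rcomp F rk (n - k))

/-- Lemma 3.7(2).  Let `Γ` be a uniform ranked poset whose
maximum element `x` has rank `d+1` (so `Γ = Γ_x`), and `R = R(Γ)`.  For every
`0 ≤ k < d`, left multiplication by `r_x` maps `R(d−1,k)` onto `R(d,k)`; that is,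
`R(d,k) = r_x·R(d−1,k)`.  Equivalently, `H^d(R(·,k), d_Γ) = 0` for all `0 ≤ k < d`. -/
theorem cohomology_top (rk : Γ → ℕ) (hrk : IsRanked rk) (hU : Uniform rk)
    (d : ℕ) (x : Vert Γ) (hx : ∀ y : Γ, y ≤ x.1) (hxr : rk x.1 = d + 1) :
    ∀ k : ℕ, k < d →
      Rnk F rk d k =
        Submodule.map (LinearMap.mulLeft F (rbar F rk x)) (Rnk F rk (d - 1) k) := by
  intro k hk
  -- rank is strictly monotone
  have hlt : ∀ a b : Γ, a < b → rk a < rk b := by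
    intro a
    induction a using WellFoundedGT.induction with
    | _ a IH =>
      intro b hab
      obtain ⟨c, hac, hcb⟩ := exists_covBy_le_of_lt hab
      have hc : rk c = rk a + 1 := hrk.2 a c hac
      rcases eq_or_lt_of_le hcb with rfl | h
      · omega
      · have := IH c hac.lt b h
        omega
  -- `x` is the unique element of rank `d + 1`
  have huniq : ∀ y : Vert Γ, rk y.1 = d + 1 → y = x := by
    intro y hy
    rcases eq_or_lt_of_le (hx y.1) with h | h
    · exact Subtype.ext h
    · have := hlt _ _ h; omega
  set mk := RingQuot.mkAlgHom F (GRel F rk) with hmk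
  -- the image of `W` in `R` is the span of the generators
  have hW' : Submodule.map mk.toLinearMap (Wsub F (Γ := Γ)) =
      Submodule.span F (Set.range (rbar F rk)) := by
    rw [Wsub, Submodule.map_span, ← Set.range_comp]
    rfl
  set W' : Submodule F (RGamma F rk) := Submodule.span F (Set.range (rbar F rk)) with hW'def
  set m := d - 1 - k with hm
  have hmdk : d - k = m + 1 := by omega
  -- `R_{m+1} = W' · R_m`
  have hR : Rcomp F rk (m + 1) = W' * Rcomp F rk m := by
    rw [Rcomp, pow_succ', Submodule.map_mul, hW']
    rfl
  -- the key computation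
  have key : Submodule.map (LinearMap.mulLeft F (rbar F rk x)) (Rcomp F rk (m + 1)) =
      ⨆ (y : Vert Γ) (_ : rk y.1 = d),
        Submodule.map (LinearMap.mulLeft F (rbar F rk x * rbar F rk y)) (Rcomp F rk m) := by
    rw [hR]
    apply le_antisymm
    · rw [Submodule.map_le_iff_le_comap]
      apply Submodule.mul_le.2
      intro w hw b hb
      rw [hW'def] at hw
      induction hw using Submodule.span_induction with
      | mem w hwmem =>
        obtain ⟨y, rfl⟩ := hwmem
        by_cases hyd : rk y.1 = d
        · apply Submodule.mem_comap.2
          refine Submodule.mem_iSup_of_mem y (Submodule.mem_iSup_of_mem hyd ?_)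
          exact ⟨b, hb, by simp [mul_assoc]⟩
        · have hz : rbar F rk x * rbar F rk y = 0 := by
            have hrel : GRel F rk (gen F x * gen F y) 0 := by
              refine GRel.mono x y ?_
              rintro ⟨hle, heq⟩
              exact hyd (by omega)
            have := RingQuot.mkAlgHom_rel F hrel
            simpa [rbar, map_mul, map_zero] using this
          apply Submodule.mem_comap.2
          simp only [LinearMap.mulLeft_apply, ← mul_assoc, hz, zero_mul]
          exact Submodule.zero_mem _
      | zero => simp
      | add w₁ w₂ h₁ h₂ ih₁ ih₂ =>
        have := Submodule.add_mem _ ih₁ ih₂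
        simpa [add_mul, mul_add] using this
      | smul a w h ih =>
        have := Submodule.smul_mem _ a ih
        simpa [smul_mul_assoc, mul_smul_comm] using this
    · refine iSup_le fun y => iSup_le fun hyd => ?_
      rintro _ ⟨b, hb, rfl⟩
      have hy : rbar F rk y ∈ W' := Submodule.subset_span ⟨y, rfl⟩
      exact ⟨rbar F rk y * b, Submodule.mul_mem_mul hy hb, by simp [mul_assoc]⟩
  -- identify `R(d,k)` with `r_x · R_{d-k}`
  have h1 : Rnk F rk d k =
      Submodule.map (LinearMap.mulLeft F (rbar F rk x)) (Rcomp F rk (d - k)) := by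
    rw [Rnk]
    apply le_antisymm
    · exact iSup_le fun y => iSup_le fun hy => by rw [huniq y hy]
    · exact le_iSup₂_of_le x hxr le_rfl
  -- identify `r_x · R(d-1,k)` with the supremum
  have h2 : Submodule.map (LinearMap.mulLeft F (rbar F rk x)) (Rnk F rk (d - 1) k) =
      ⨆ (y : Vert Γ) (_ : rk y.1 = d),
        Submodule.map (LinearMap.mulLeft F (rbar F rk x * rbar F rk y)) (Rcomp F rk m) := by
    rw [Rnk]
    have hd1 : d - 1 + 1 = d := by omega
    have hd2 : d - 1 - k = m := rfl
    rw [hd1, hd2, Submodule.map_iSup]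
    refine iSup_congr fun y => ?_
    rw [Submodule.map_iSup]
    refine iSup_congr fun hy => ?_
    rw [← Submodule.map_comp, ← LinearMap.mulLeft_mul]
  rw [h1, hmdk, key, h2]
end

section
/- Let Γ be a uniform ranked poset and R = R(Γ). For every x ∈ Γ′ and every n ≥ 1, the sum of right ideals defining H_x(n) is direct: H_x(n) = ⊕_{y ∈ Γ′, y ∉ S_x(n)} r_y R; moreover, for every n ≥ 0 the sum r_x(n+1)R + H_x(n+1) is direct, i.e. r_x(n+1)R ∩ H_x(n+1) = 0. -/
set_option linter.unusedSectionVars false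
set_option linter.unusedVariables false

open scoped Classical

variable {Γ : Type*} [PartialOrder Γ] [OrderBot Γ] [Fintype Γ]

variable (F : Type*) [Field F]

section Aux

variable {Γ : Type*} [PartialOrder Γ] [OrderBot Γ] [Fintype Γ]
variable (F : Type*) [Field F]

/-- The augmentation (constant-term) map. -/
noncomputable def epsA : FreeAlgebra F (Vert Γ) →ₐ[F] F :=
  FreeAlgebra.lift F (fun _ : Vert Γ => (0 : F))

lemma epsA_gen (x : Vert Γ) : epsA F (gen F x) = 0 := by
  simp [epsA, gen]

/-- A matrix representation recording the "first letter `v`" component. -/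
noncomputable def PhiA (v : Vert Γ) :
    FreeAlgebra F (Vert Γ) →ₐ[F] Matrix (Fin 2) (Fin 2) (FreeAlgebra F (Vert Γ)) :=
  FreeAlgebra.lift F
    (fun x : Vert Γ => !![0, if x = v then 1 else 0; 0, gen F x])

lemma PhiA_gen (v x : Vert Γ) :
    PhiA F v (gen F x) = !![0, if x = v then 1 else 0; 0, gen F x] := by
  simp [PhiA, gen]

lemma PhiA_entries (v : Vert Γ) (a : FreeAlgebra F (Vert Γ)) :
    PhiA F v a 1 0 = 0 ∧ PhiA F v a 1 1 = a ∧
      PhiA F v a 0 0 = algebraMap F _ (epsA F a) := by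
  induction a using FreeAlgebra.induction with
  | grade0 r =>
    simp [AlgHom.commutes, Matrix.algebraMap_matrix_apply]
  | grade1 x =>
    have h := PhiA_gen F v x
    have he := epsA_gen F x
    rw [show FreeAlgebra.ι F x = gen F x from rfl, h, he]
    refine ⟨?_, ?_, ?_⟩ <;> simp
  | mul a b ha hb =>
    obtain ⟨ha1, ha2, ha3⟩ := ha
    obtain ⟨hb1, hb2, hb3⟩ := hb
    rw [map_mul]
    refine ⟨?_, ?_, ?_⟩ <;>
      simp [Matrix.mul_apply, Fin.sum_univ_two, ha1, ha2, ha3, hb1, hb2, hb3, map_mul]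
  | add a b ha hb =>
    obtain ⟨ha1, ha2, ha3⟩ := ha
    obtain ⟨hb1, hb2, hb3⟩ := hb
    rw [map_add]
    refine ⟨?_, ?_, ?_⟩ <;> simp [Matrix.add_apply, ha1, ha2, ha3, hb1, hb2, hb3, map_add]

/-- Projection (in the free algebra) onto the span of words with first letter `v`. -/
noncomputable def pivA (v : Vert Γ) (a : FreeAlgebra F (Vert Γ)) : FreeAlgebra F (Vert Γ) :=
  gen F v * (PhiA F v a 0 1)

lemma pivA_zero (v : Vert Γ) : pivA F v 0 = 0 := by
  simp [pivA]

lemma pivA_add (v : Vert Γ) (a b : FreeAlgebra F (Vert Γ)) :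
    pivA F v (a + b) = pivA F v a + pivA F v b := by
  simp [pivA, Matrix.add_apply, mul_add]

lemma pivA_smul (v : Vert Γ) (c : F) (a : FreeAlgebra F (Vert Γ)) :
    pivA F v (c • a) = c • pivA F v a := by
  simp [pivA, map_smul, Matrix.smul_apply, mul_smul_comm]

lemma pivA_gen_mul (v x : Vert Γ) (u : FreeAlgebra F (Vert Γ)) :
    pivA F v (gen F x * u) = if x = v then gen F x * u else 0 := by
  unfold pivA
  rw [map_mul, Matrix.mul_apply, Fin.sum_univ_two, PhiA_gen]
  have h1 := (PhiA_entries F v u).2.1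
  by_cases h : x = v <;> simp [h, h1]

lemma pivA_mul (v : Vert Γ) (a c : FreeAlgebra F (Vert Γ)) :
    pivA F v (a * c) = pivA F v a * c + epsA F a • pivA F v c := by
  unfold pivA
  obtain ⟨-, ha2, ha3⟩ := PhiA_entries F v a
  obtain ⟨-, hc2, -⟩ := PhiA_entries F v c
  rw [map_mul, Matrix.mul_apply, Fin.sum_univ_two, ha3, hc2, mul_add,
    ← Algebra.smul_def, mul_smul_comm, mul_assoc, add_comm]

end Aux

section Quot

variable {Γ : Type*} [PartialOrder Γ] [OrderBot Γ] [Fintype Γ]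
variable (F : Type*) [Field F] (rk : Γ → ℕ)

lemma mkAlgHom_eq_quot (a : FreeAlgebra F (Vert Γ)) :
    RingQuot.mkAlgHom F (GRel F rk) a = ⟨Quot.mk _ a⟩ := by
  have h1 : RingQuot.mkAlgHom F (GRel F rk) a = RingQuot.mkRingHom (GRel F rk) a := by
    rw [← RingQuot.mkAlgHom_coe F]
    rfl
  rw [h1, RingQuot.mkRingHom_def]
  rfl

lemma mk_eq_of_rel {a b : FreeAlgebra F (Vert Γ)}
    (h : RingQuot.Rel (GRel F rk) a b) :
    RingQuot.mkAlgHom F (GRel F rk) a = RingQuot.mkAlgHom F (GRel F rk) b := by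
  rw [mkAlgHom_eq_quot, mkAlgHom_eq_quot]
  exact congrArg RingQuot.mk (Quot.sound h)

/-- The augmentation descends to `R(Γ)`. -/
noncomputable def epsBar : RGamma F rk →ₐ[F] F :=
  RingQuot.liftAlgHom F ⟨epsA F, by
    intro a b h
    cases h with
    | mono x y hy => simp [map_mul, epsA_gen]
    | adj x => simp [map_mul, epsA_gen]⟩

lemma epsA_eq_of_rel {a b : FreeAlgebra F (Vert Γ)}
    (h : RingQuot.Rel (GRel F rk) a b) : epsA F a = epsA F b := by
  have h2 := congrArg (epsBar F rk) (mk_eq_of_rel F rk h)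
  simpa only [epsBar, RingQuot.liftAlgHom_mkAlgHom_apply] using h2

lemma piv_rel (v : Vert Γ) : ∀ ⦃a b : FreeAlgebra F (Vert Γ)⦄,
    RingQuot.Rel (GRel F rk) a b →
    RingQuot.mkAlgHom F (GRel F rk) (pivA F v a)
      = RingQuot.mkAlgHom F (GRel F rk) (pivA F v b) := by
  intro a b h
  induction h with
  | of h =>
    have hz : pivA F v (0 : FreeAlgebra F (Vert Γ)) = 0 := pivA_zero F v
    cases h with
    | mono x y hy =>
      rw [hz, pivA_gen_mul, map_zero]
      split_ifs with hxv
      · rw [RingQuot.mkAlgHom_rel F (GRel.mono x y hy), map_zero]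
      · rw [map_zero]
    | adj x =>
      rw [hz, pivA_gen_mul, map_zero]
      split_ifs with hxv
      · rw [RingQuot.mkAlgHom_rel F (GRel.adj x), map_zero]
      · rw [map_zero]
  | add_left _ ih =>
    rw [pivA_add, pivA_add, map_add, map_add, ih]
  | mul_left h ih =>
    rw [pivA_mul, pivA_mul, map_add, map_add, map_mul, map_mul, map_smul, map_smul, ih,
      epsA_eq_of_rel F rk h]
  | mul_right h ih =>
    rw [pivA_mul, pivA_mul, map_add, map_add, map_mul, map_mul, map_smul, map_smul, ih,
      mk_eq_of_rel F rk h]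

/-- The projection `P_v` on `R(Γ)`, as a bare function. -/
noncomputable def PvFun (v : Vert Γ) (s : RGamma F rk) : RGamma F rk :=
  Quot.lift (fun a => RingQuot.mkAlgHom F (GRel F rk) (pivA F v a))
    (fun _ _ h => piv_rel F rk v h) s.toQuot

lemma PvFun_mk (v : Vert Γ) (a : FreeAlgebra F (Vert Γ)) :
    PvFun F rk v (RingQuot.mkAlgHom F (GRel F rk) a)
      = RingQuot.mkAlgHom F (GRel F rk) (pivA F v a) := by
  rw [mkAlgHom_eq_quot]
  rfl

/-- The projection `P_v` on `R(Γ)`, as a linear map. -/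
noncomputable def PvL (v : Vert Γ) : RGamma F rk →ₗ[F] RGamma F rk where
  toFun := PvFun F rk v
  map_add' s t := by
    obtain ⟨a, rfl⟩ := RingQuot.mkAlgHom_surjective F (GRel F rk) s
    obtain ⟨b, rfl⟩ := RingQuot.mkAlgHom_surjective F (GRel F rk) t
    rw [← map_add, PvFun_mk, PvFun_mk, PvFun_mk, pivA_add, map_add]
  map_smul' c s := by
    obtain ⟨a, rfl⟩ := RingQuot.mkAlgHom_surjective F (GRel F rk) s
    show PvFun F rk v (c • RingQuot.mkAlgHom F (GRel F rk) a)
        = (RingHom.id F) c • PvFun F rk v (RingQuot.mkAlgHom F (GRel F rk) a)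
    rw [RingHom.id_apply, ← map_smul, PvFun_mk, PvFun_mk, pivA_smul, map_smul]

lemma PvL_rbar_mul (v z : Vert Γ) (s : RGamma F rk) :
    PvL F rk v (rbar F rk z * s) = if z = v then rbar F rk z * s else 0 := by
  obtain ⟨t, rfl⟩ := RingQuot.mkAlgHom_surjective F (GRel F rk) s
  have : rbar F rk z * RingQuot.mkAlgHom F (GRel F rk) t
      = RingQuot.mkAlgHom F (GRel F rk) (gen F z * t) := by
    rw [rbar, ← map_mul]
  rw [this]
  show PvFun F rk v _ = _
  rw [PvFun_mk, pivA_gen_mul]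
  split_ifs with h
  · rfl
  · exact map_zero _

end Quot

/-- Let `Γ` be a uniform ranked poset and `R = R(Γ)`.  For every
`x ∈ Γ'` and every `n ≥ 1`, the sum of right ideals defining
`H_x(n) = Σ_{y ∉ S_x(n)} r_y R` is direct (the family `{r_y R}_{y ∉ S_x(n)}` is
independent); moreover, for every `n ≥ 0` the sum `r_x(n+1)R + H_x(n+1)` is direct,
i.e. `r_x(n+1)R ∩ H_x(n+1) = 0`. -/
theorem Hsub_direct (rk : Γ → ℕ) (hrk : IsRanked rk) (hU : Uniform rk) (x : Vert Γ) :
    (∀ n : ℕ, 1 ≤ n →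
      iSupIndep (fun y : {y : Vert Γ // y.1 ∉ rankSet rk x.1 n} => rIdeal F rk y.1)) ∧
    (∀ n : ℕ,
      LinearMap.range (LinearMap.mulLeft F (rxnbar F rk x.1 (n + 1)))
        ⊓ Hsub F rk x.1 (n + 1) = ⊥) := by
  have surj := RingQuot.mkAlgHom_surjective F (GRel F rk)
  constructor
  · -- independence of the family `{r_y R}`
    intro n hn i
    rw [Submodule.disjoint_def]
    intro u hu hu'
    simp only [rIdeal, LinearMap.mem_range] at hu
    obtain ⟨s, rfl⟩ := hu
    rw [LinearMap.mulLeft_apply]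
    have hker : (⨆ (j : {y : Vert Γ // y.1 ∉ rankSet rk x.1 n}) (_ : j ≠ i),
        rIdeal F rk j.1) ≤ LinearMap.ker (PvL F rk i.1) := by
      refine iSup_le fun j => iSup_le fun hj => ?_
      intro w hw
      simp only [rIdeal, LinearMap.mem_range] at hw
      obtain ⟨s', rfl⟩ := hw
      rw [LinearMap.mem_ker, LinearMap.mulLeft_apply, PvL_rbar_mul, if_neg]
      intro hji
      exact hj (Subtype.ext hji)
    have h0 : PvL F rk i.1 (rbar F rk i.1 * s) = 0 := by
      have := hker hu'
      rw [LinearMap.mem_ker, LinearMap.mulLeft_apply] at this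
      exact this
    have h1 : PvL F rk i.1 (rbar F rk i.1 * s) = rbar F rk i.1 * s := by
      rw [PvL_rbar_mul, if_pos rfl]
    rw [← h1, h0]
  · -- `r_x(n+1) R ∩ H_x(n+1) = 0`
    intro n
    rw [eq_bot_iff]
    intro u hu
    rw [Submodule.mem_inf] at hu
    obtain ⟨hu1, hu2⟩ := hu
    set T : Finset (Vert Γ) :=
      Finset.univ.filter (fun v : Vert Γ => v.1 ∈ rankSet rk x.1 (n + 1)) with hT
    set P : RGamma F rk →ₗ[F] RGamma F rk := ∑ v ∈ T, PvL F rk v with hP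
    have hPval : ∀ (z : Vert Γ) (s : RGamma F rk),
        P (rbar F rk z * s) = if z ∈ T then rbar F rk z * s else 0 := by
      intro z s
      rw [hP, LinearMap.sum_apply]
      rw [Finset.sum_congr rfl (fun v _ => PvL_rbar_mul F rk v z s)]
      exact Finset.sum_ite_eq T z (fun _ => rbar F rk z * s)
    have hH : Hsub F rk x.1 (n + 1) ≤ LinearMap.ker P := by
      refine iSup_le fun y => iSup_le fun hy => ?_
      intro w hw
      simp only [rIdeal, LinearMap.mem_range] at hw
      obtain ⟨s, rfl⟩ := hw
      rw [LinearMap.mem_ker, LinearMap.mulLeft_apply, hPval, if_neg]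
      rw [hT]
      simp only [Finset.mem_filter, Finset.mem_univ, true_and]
      exact hy
    rw [LinearMap.mem_range] at hu1
    obtain ⟨s, hs⟩ := hu1
    rw [LinearMap.mulLeft_apply] at hs
    have hdecomp : u = ∑ z ∈ T, rbar F rk z * s := by
      rw [← hs, rxnbar, rxn, ← hT, map_sum, Finset.sum_mul]
      rfl
    have hPu : P u = u := by
      conv_lhs => rw [hdecomp]
      rw [map_sum]
      rw [Finset.sum_congr rfl (fun z hz => by rw [hPval z s, if_pos hz])]
      exact hdecomp.symm
    have hPu0 : P u = 0 := hH hu2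
    rw [Submodule.mem_bot, ← hPu, hPu0]
end
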